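/- arXiv:1511.08405 — 6 statements merged into one kernel-verified Lean document; each statement's English description precedes it below -/
import Mathlib

section
/- Let d ≥ 1, s an integer with 3 ≤ s ≤ d, and T ≥ 1. There exists a full-information strategy (Online Mirror Descent with regularizer h_p for p = 1 + (2 log s − 1)^{−1} and parameter η = √((p−1)/(T s^{2/q})), where 1/p + 1/q = 1) such that for every sequence g_1,…,g_T of s-sparse gain vectors in [0,1]^d, the regret satisfies R_T ≤ √(2e T log s). -/
/-
The regret of lazy mirror descent with regulariser `h_p = ‖·‖_p² / 2` on the simplex is at most
`1/(2η) + η ∑_t ‖g_t‖_q² / (2(p-1))`: comparing each iterate with the next through the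
`(p-1)`-strong convexity of `h_p` with respect to `‖·‖_p` leaves, per stage, a term
`η⟨g_t, Δ⟩ - (p-1)/2 ‖Δ‖_p²`, which Hölder and AM-GM bound by `η² ‖g_t‖_q² / (2(p-1))`.
Strong convexity is checked along segments: with `v = y - x`, `w = x + θv`, `S = ∑ w_i^p`,
`A = ∑ w_i^{p-1} v_i` and `B = ∑ w_i^{p-2} v_i²`, the second derivative of `θ ↦ h_p(w)` is
`(2-p) S^{2/p-2} A² + (p-1) S^{2/p-1} B`, and Hölder with exponents `2/p`, `2/(2-p)` gives
`‖v‖_p² ≤ S^{2/p-1} B`.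
For `s`-sparse gains in `[0,1]^d`, `‖g‖_q² ≤ s^{2/q}`, which equals `e` at `q = 2 log s`; tuning
`η` then gives `√(T e (q-1)) ≤ √(2 e T log s)`.
-/

open Finset Filter MeasureTheory ProbabilityTheory Real

noncomputable section

/-- Number of nonzero coordinates of a vector in `ℝ^d`. -/
def supp0 {d : ℕ} (w : Fin d → ℝ) : ℕ := Set.ncard {i | w i ≠ 0}

/-- A vector is `s`-sparse if at most `s` of its coordinates are nonzero. -/
def IsSparse {d : ℕ} (s : ℕ) (w : Fin d → ℝ) : Prop := supp0 w ≤ s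

/-- All coordinates lie in `[0,1]`. -/
def InCube {d : ℕ} (w : Fin d → ℝ) : Prop := ∀ i, w i ∈ Set.Icc (0:ℝ) 1

/-- A full-information strategy is valid if it always plays a point of the simplex `Δ_d`. -/
def IsStrategy {d : ℕ} (σ : ∀ t : ℕ, (Fin t → (Fin d → ℝ)) → (Fin d → ℝ)) : Prop :=
  ∀ t h, (∀ i, 0 ≤ σ t h i) ∧ ∑ i, σ t h i = 1

/-- The mixed action played at stage `t` against the sequence `ω` of outcome vectors. -/
def play {d : ℕ} (σ : ∀ t : ℕ, (Fin t → (Fin d → ℝ)) → (Fin d → ℝ))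
    (ω : ℕ → Fin d → ℝ) (t : ℕ) : Fin d → ℝ := σ t fun k => ω k

/-- Regret after `T` stages when outcomes are gains. -/
def gainRegret {d : ℕ} (σ : ∀ t : ℕ, (Fin t → (Fin d → ℝ)) → (Fin d → ℝ))
    (g : ℕ → Fin d → ℝ) (T : ℕ) : ℝ :=
  (⨆ i, ∑ t ∈ Finset.range T, g t i) -
    ∑ t ∈ Finset.range T, ∑ i, g t i * play σ g t i

namespace SparseOMD

variable {ι : Type*} [Fintype ι]

def pNorm (p : ℝ) (v : ι → ℝ) : ℝ := (∑ i, |v i| ^ p) ^ (1 / p)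

def lpReg (p : ℝ) (x : ι → ℝ) : ℝ := pNorm p x ^ 2 / 2

lemma pNorm_sq (p : ℝ) (v : ι → ℝ) : pNorm p v ^ 2 = (∑ i, |v i| ^ p) ^ (2 / p) := by
  rw [pNorm, ← rpow_mul_natCast (sum_nonneg fun _ _ => rpow_nonneg (abs_nonneg _) _)]
  ring_nf

lemma lpReg_nonneg (p : ℝ) (x : ι → ℝ) : 0 ≤ lpReg p x := by
  unfold lpReg; positivity

lemma lpReg_single [DecidableEq ι] {p : ℝ} (hp : p ≠ 0) (i : ι) :
    lpReg p (Pi.single i 1) = 1 / 2 := by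
  have : ∑ j, |(Pi.single i (1 : ℝ) : ι → ℝ) j| ^ p = 1 := by
    rw [Fintype.sum_eq_single i fun j hj => by simp [hj, zero_rpow hp]]
    simp
  rw [lpReg, pNorm_sq, this, one_rpow]

lemma continuous_lpReg {p : ℝ} (hp : 0 < p) : Continuous (lpReg (ι := ι) p) :=
  ((continuous_finsetSum _ fun i _ => (continuous_apply i).abs.rpow_const fun _ => Or.inr hp.le)
    |>.rpow_const fun _ => Or.inr (by positivity)).pow 2 |>.div_const 2

lemma dotProduct_le_pNorm_mul_pNorm {p q : ℝ} (hpq : q.HolderConjugate p) (u v : ι → ℝ) :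
    u ⬝ᵥ v ≤ pNorm q u * pNorm p v :=
  inner_le_Lp_mul_Lq univ u v hpq

lemma mul_dotProduct_sub_le {p q μ η : ℝ} (hpq : q.HolderConjugate p) (hμ : 0 < μ) (hη : 0 ≤ η)
    (u v : ι → ℝ) : η * (u ⬝ᵥ v) - μ / 2 * pNorm p v ^ 2 ≤ η ^ 2 * pNorm q u ^ 2 / (2 * μ) := by
  have hholder := mul_le_mul_of_nonneg_left (dotProduct_le_pNorm_mul_pNorm hpq u v) hη
  rw [le_div_iff₀ (by positivity)]
  nlinarith [sq_nonneg (η * pNorm q u - μ * pNorm p v)]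

omit [Fintype ι] in
lemma sum_abs_rpow_le_weighted {p : ℝ} (hp0 : 0 < p) (hp2 : p < 2) (I : Finset ι) {w : ι → ℝ}
    (hw : ∀ i ∈ I, 0 < w i) (v : ι → ℝ) :
    ∑ i ∈ I, |v i| ^ p ≤
      (∑ i ∈ I, w i ^ (p - 2) * v i ^ 2) ^ (p / 2) * (∑ i ∈ I, w i ^ p) ^ ((2 - p) / 2) := by
  have h2p : 2 - p ≠ 0 := by linarith
  have hpqr : HolderTriple 2 (2 * p / (2 - p)) p :=
    ⟨by field_simp; ring, two_pos, div_pos (by positivity) (by linarith)⟩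
  have key := Lr_rpow_le_Lp_mul_Lq_of_nonneg I hpqr
    (f := fun i => |v i| * w i ^ ((p - 2) / 2)) (g := fun i => w i ^ ((2 - p) / 2))
    (fun i hi => mul_nonneg (abs_nonneg _) (rpow_nonneg (hw i hi).le _))
    (fun i hi => rpow_nonneg (hw i hi).le _)
  convert key using 3 with i hi
  · rw [mul_assoc, ← rpow_add (hw i hi), show (p - 2) / 2 + (2 - p) / 2 = 0 by ring, rpow_zero,
      mul_one]
  · refine sum_congr rfl fun i hi => ?_
    rw [mul_rpow (abs_nonneg _) (rpow_nonneg (hw i hi).le _), ← rpow_mul (hw i hi).le, rpow_two,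
      sq_abs, mul_comm]
    ring_nf
  · refine sum_congr rfl fun i hi => ?_
    rw [← rpow_mul (hw i hi).le]
    field_simp
  · field_simp

lemma pNorm_sq_le_weighted {p : ℝ} (hp0 : 0 < p) (hp2 : p < 2)
    {I : Finset ι} {w v : ι → ℝ} (hw : ∀ i ∈ I, 0 < w i) (hv : ∀ i ∉ I, v i = 0) :
    pNorm p v ^ 2 ≤ (∑ i ∈ I, w i ^ (p - 2) * v i ^ 2) * (∑ i ∈ I, w i ^ p) ^ (2 / p - 1) := by
  have hB : 0 ≤ ∑ i ∈ I, w i ^ (p - 2) * v i ^ 2 :=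
    sum_nonneg fun i hi => mul_nonneg (rpow_nonneg (hw i hi).le _) (sq_nonneg _)
  have hS : 0 ≤ ∑ i ∈ I, w i ^ p := sum_nonneg fun i hi => rpow_nonneg (hw i hi).le _
  have hsupp : ∑ i, |v i| ^ p = ∑ i ∈ I, |v i| ^ p :=
    (sum_subset (subset_univ I) fun i _ hi => by rw [hv i hi, abs_zero, zero_rpow hp0.ne']).symm
  calc pNorm p v ^ 2
      ≤ ((∑ i ∈ I, w i ^ (p - 2) * v i ^ 2) ^ (p / 2) *
          (∑ i ∈ I, w i ^ p) ^ ((2 - p) / 2)) ^ (2 / p) := by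
        rw [pNorm_sq, hsupp]
        exact rpow_le_rpow (sum_nonneg fun _ _ => rpow_nonneg (abs_nonneg _) _)
          (sum_abs_rpow_le_weighted hp0 hp2 I hw v) (by positivity)
    _ = _ := by
        rw [mul_rpow (rpow_nonneg hB _) (rpow_nonneg hS _), ← rpow_mul hB, ← rpow_mul hS,
          show p / 2 * (2 / p) = 1 by field_simp, show (2 - p) / 2 * (2 / p) = 2 / p - 1 by
          field_simp, rpow_one]

omit [Fintype ι] in
lemma hasDerivAt_sum_mul_rpow (I : Finset ι) (a b c : ι → ℝ) {r θ : ℝ}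
    (h : ∀ i ∈ I, 0 < a i + θ * b i) :
    HasDerivAt (fun t => ∑ i ∈ I, (a i + t * b i) ^ r * c i)
      (r * ∑ i ∈ I, (a i + θ * b i) ^ (r - 1) * (b i * c i)) θ := by
  refine (HasDerivAt.fun_sum fun i hi =>
    ((((hasDerivAt_id θ).mul_const (b i)).const_add (a i)).rpow_const
      (Or.inl (h i hi).ne')).mul_const (c i)).congr_deriv ?_
  rw [mul_sum]
  exact sum_congr rfl fun i _ => by simp only [id]; ring

lemma convexOn_rpow_sum_line_sub_sq {p : ℝ} (hp1 : 1 < p) (hp2 : p < 2) {I : Finset ι}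
    (hI : I.Nonempty) {a b : ι → ℝ} (hpos : ∀ θ ∈ Set.Ioo (0 : ℝ) 1, ∀ i ∈ I, 0 < a i + θ * b i)
    (hb : ∀ i ∉ I, b i = 0) :
    ConvexOn ℝ (Set.Icc 0 1) fun θ =>
      (∑ i ∈ I, (a i + θ * b i) ^ p) ^ (2 / p) / 2 - (p - 1) * pNorm p b ^ 2 * θ ^ 2 / 2 := by
  set c := (p - 1) * pNorm p b ^ 2
  set S := fun θ : ℝ => ∑ i ∈ I, (a i + θ * b i) ^ p
  set A := fun θ : ℝ => ∑ i ∈ I, (a i + θ * b i) ^ (p - 1) * b i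
  set B := fun θ : ℝ => ∑ i ∈ I, (a i + θ * b i) ^ (p - 2) * b i ^ 2
  have hSpos : ∀ θ ∈ Set.Ioo (0 : ℝ) 1, 0 < S θ := fun θ hθ =>
    sum_pos (fun i hi => rpow_pos_of_pos (hpos θ hθ i hi) p) hI
  have hS : ∀ θ ∈ Set.Ioo (0 : ℝ) 1, HasDerivAt S (p * A θ) θ := fun θ hθ => by
    simpa [S, A] using hasDerivAt_sum_mul_rpow I a b 1 (hpos θ hθ) (r := p)
  have hA : ∀ θ ∈ Set.Ioo (0 : ℝ) 1, HasDerivAt A ((p - 1) * B θ) θ := fun θ hθ => by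
    convert hasDerivAt_sum_mul_rpow I a b b (hpos θ hθ) (r := p - 1) using 3 with i
    rw [show p - 1 - 1 = p - 2 by ring, sq]
  have hcont : Continuous fun θ => S θ ^ (2 / p) / 2 - c * θ ^ 2 / 2 := by
    have : Continuous S := continuous_finsetSum _ fun i _ =>
      (continuous_const.add (continuous_id.mul continuous_const)).rpow_const
        fun _ => Or.inr (by linarith)
    exact ((this.rpow_const fun _ => Or.inr (by positivity)).div_const 2).sub (by fun_prop)
  refine convexOn_of_hasDerivWithinAt2_nonneg (convex_Icc 0 1) hcont.continuousOn
    (f' := fun θ => S θ ^ (2 / p - 1) * A θ - c * θ)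
    (f'' := fun θ =>
      (2 - p) * S θ ^ (2 / p - 2) * A θ ^ 2 + (p - 1) * (S θ ^ (2 / p - 1) * B θ) - c)
    ?_ ?_ ?_ <;> rw [interior_Icc (a := (0:ℝ))] <;> intro θ hθ
  · refine HasDerivAt.hasDerivWithinAt ?_
    refine ((((hS θ hθ).rpow_const (Or.inr ?_)).div_const 2).sub
      (((hasDerivAt_pow 2 θ).const_mul c).div_const 2)).congr_deriv ?_
    · rw [le_div_iff₀ (by linarith)]; linarith
    · field_simp; ring
  · refine HasDerivAt.hasDerivWithinAt ?_
    refine ((((hS θ hθ).rpow_const (Or.inl (hSpos θ hθ).ne')).mul (hA θ hθ)).sub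
      ((hasDerivAt_id θ).const_mul c)).congr_deriv ?_
    rw [show 2 / p - 1 - 1 = 2 / p - 2 by ring]
    field_simp
  · have hholder : c ≤ (p - 1) * (S θ ^ (2 / p - 1) * B θ) := by
      rw [mul_comm (S θ ^ _)]
      exact mul_le_mul_of_nonneg_left
        (pNorm_sq_le_weighted (by linarith) hp2 (hpos θ hθ) hb) (by linarith)
    have : 0 ≤ (2 - p) * S θ ^ (2 / p - 2) * A θ ^ 2 :=
      mul_nonneg (mul_nonneg (by linarith) (rpow_nonneg (hSpos θ hθ).le _)) (sq_nonneg _)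
    linarith

lemma convexOn_lpReg_segment_sub_sq {p : ℝ} (hp1 : 1 < p) (hp2 : p < 2) {x y : ι → ℝ}
    (hx : x ∈ stdSimplex ℝ ι) (hy : y ∈ stdSimplex ℝ ι) :
    ConvexOn ℝ (Set.Icc 0 1) fun θ : ℝ =>
      lpReg p (x + θ • (y - x)) - (p - 1) * pNorm p (y - x) ^ 2 * θ ^ 2 / 2 := by
  classical
  set I := univ.filter fun i => 0 < x i + y i
  have hout : ∀ i ∉ I, x i = 0 ∧ y i = 0 := fun i hi => by
    simp only [I, mem_filter, mem_univ, true_and, not_lt] at hi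
    constructor <;> linarith [hx.1 i, hy.1 i]
  have hI : I.Nonempty := by
    obtain ⟨i, -, hi⟩ := exists_ne_zero_of_sum_ne_zero (hx.2.trans_ne one_ne_zero)
    exact ⟨i, by simpa [I] using add_pos_of_pos_of_nonneg ((hx.1 i).lt_of_ne' hi) (hy.1 i)⟩
  have hpos : ∀ θ ∈ Set.Ioo (0 : ℝ) 1, ∀ i ∈ I, 0 < x i + θ * (y - x) i := by
    intro θ hθ i hi
    simp only [I, mem_filter, mem_univ, true_and] at hi
    have hyi := hy.1 i
    rcases (hx.1 i).lt_or_eq with hxi | hxi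
    · simp only [Pi.sub_apply]; nlinarith [hθ.1, hθ.2]
    · simp only [Pi.sub_apply, ← hxi] at hi ⊢; nlinarith [hθ.1]
  refine (convexOn_rpow_sum_line_sub_sq hp1 hp2 hI hpos fun i hi => ?_).congr fun θ hθ => ?_
  · simp [(hout i hi).1, (hout i hi).2]
  · have hw : ∀ i, 0 ≤ (x + θ • (y - x)) i := fun i =>
      ((convex_stdSimplex ℝ ι).add_smul_sub_mem hx hy hθ).1 i
    beta_reduce
    rw [lpReg, pNorm_sq p (x + θ • (y - x))]
    congr 3
    refine (sum_subset (subset_univ I) fun i _ hi => ?_).trans (sum_congr rfl fun i _ => ?_)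
    · simp [(hout i hi).1, (hout i hi).2, zero_rpow (by linarith : p ≠ 0)]
    · rw [abs_of_nonneg (hw i)]; rfl

open Topology in
lemma le_apply_one_of_convexOn_sub_sq {φ : ℝ → ℝ} {b c : ℝ}
    (hconv : ConvexOn ℝ (Set.Icc 0 1) fun θ => φ θ - c * θ ^ 2 / 2)
    (hslope : ∀ θ ∈ Set.Ioc (0 : ℝ) 1, b * θ ≤ φ θ - φ 0) : φ 0 + b + c / 2 ≤ φ 1 := by
  have hbound : ∀ θ ∈ Set.Ioc (0 : ℝ) 1, b ≤ φ 1 - φ 0 - c / 2 + c * θ / 2 := by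
    intro θ hθ
    have h := hconv.2 (Set.left_mem_Icc.2 zero_le_one) (Set.right_mem_Icc.2 zero_le_one)
      (sub_nonneg.2 hθ.2) hθ.1.le (sub_add_cancel 1 θ)
    simp only [smul_eq_mul, mul_zero, zero_add, mul_one] at h
    have : θ * b ≤ θ * (φ 1 - φ 0 - c / 2 + c * θ / 2) := by nlinarith [hslope θ hθ]
    exact le_of_mul_le_mul_left this hθ.1
  have hlim : Tendsto (fun θ : ℝ => φ 1 - φ 0 - c / 2 + c * θ / 2) (𝓝[>] 0)
      (𝓝 (φ 1 - φ 0 - c / 2)) := by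
    refine tendsto_nhdsWithin_of_tendsto_nhds ?_
    exact (by fun_prop : Continuous fun θ : ℝ => φ 1 - φ 0 - c / 2 + c * θ / 2).tendsto' 0 _
      (by simp)
  linarith [ge_of_tendsto hlim (eventually_of_mem (Ioc_mem_nhdsGT zero_lt_one) hbound)]

lemma lpReg_growth_of_isMaxOn {p : ℝ} (hp1 : 1 < p) (hp2 : p < 2) {u z y : ι → ℝ}
    (hz : z ∈ stdSimplex ℝ ι) (hmax : IsMaxOn (fun x => u ⬝ᵥ x - lpReg p x) (stdSimplex ℝ ι) z)
    (hy : y ∈ stdSimplex ℝ ι) :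
    u ⬝ᵥ y - lpReg p y + (p - 1) / 2 * pNorm p (y - z) ^ 2 ≤ u ⬝ᵥ z - lpReg p z := by
  have key := le_apply_one_of_convexOn_sub_sq (φ := fun θ : ℝ => lpReg p (z + θ • (y - z)))
    (b := u ⬝ᵥ (y - z)) (convexOn_lpReg_segment_sub_sq hp1 hp2 hz hy) fun θ hθ => by
      have h := hmax ((convex_stdSimplex ℝ ι).add_smul_sub_mem hz hy (Set.Ioc_subset_Icc_self hθ))
      simp only [Set.mem_ofPred_eq, dotProduct_add, dotProduct_smul, smul_eq_mul] at h
      simp only [zero_smul, add_zero]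
      linarith
  simp only [zero_smul, add_zero, one_smul, add_sub_cancel, dotProduct_sub] at key
  linarith

/-- Lazy online mirror descent (dual averaging): at stage `t` play a maximiser over `K` of
`x ↦ ⟨η ∑_{k<t} ω_k, x⟩ - R x`, or an arbitrary point if there is none. -/
def ftrl (K : Set (ι → ℝ)) (R : (ι → ℝ) → ℝ) (η : ℝ) (t : ℕ) (h : Fin t → ι → ℝ) : ι → ℝ :=
  Classical.epsilon fun z => z ∈ K ∧ IsMaxOn (fun x => (η • ∑ k, h k) ⬝ᵥ x - R x) K z

lemma ftrl_spec {K : Set (ι → ℝ)} (hK : IsCompact K) (hne : K.Nonempty) {R : (ι → ℝ) → ℝ}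
    (hR : ContinuousOn R K) (η : ℝ) (t : ℕ) (h : Fin t → ι → ℝ) :
    ftrl K R η t h ∈ K ∧ IsMaxOn (fun x => (η • ∑ k, h k) ⬝ᵥ x - R x) K (ftrl K R η t h) :=
  Classical.epsilon_spec <| hK.exists_isMaxOn hne <|
    ((continuous_const.dotProduct continuous_id).continuousOn).sub hR

lemma ftrl_regret_le {K : Set (ι → ℝ)} {R D : (ι → ℝ) → ℝ} {η δ : ℝ} (g x : ℕ → ι → ℝ)
    (hmax : ∀ t, IsMaxOn (fun y => (η • ∑ k ∈ range t, g k) ⬝ᵥ y - R y) K (x t))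
    (hgrowth : ∀ t, (η • ∑ k ∈ range t, g k) ⬝ᵥ x (t + 1) - R (x (t + 1)) + D (x (t + 1) - x t)
      ≤ (η • ∑ k ∈ range t, g k) ⬝ᵥ x t - R (x t))
    (hstab : ∀ t, η * (g t ⬝ᵥ (x (t + 1) - x t)) - D (x (t + 1) - x t) ≤ δ)
    {y : ι → ℝ} (hy : y ∈ K) (T : ℕ) :
    η * (∑ t ∈ range T, g t ⬝ᵥ y - ∑ t ∈ range T, g t ⬝ᵥ x t) ≤ R y - R (x 0) + T * δ := by
  have hleader : ∀ n : ℕ, (η • ∑ k ∈ range n, g k) ⬝ᵥ x n - R (x n)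
      ≤ η * ∑ t ∈ range n, g t ⬝ᵥ x t - R (x 0) + n * δ := by
    intro n
    induction n with
    | zero => simp
    | succ n ih =>
      have hg := hgrowth n
      have hs := hstab n
      simp only [sum_range_succ, smul_add, add_dotProduct, smul_dotProduct, smul_eq_mul,
        dotProduct_sub, push_cast] at ih hg hs ⊢
      linarith
  have := (hmax T hy).trans (hleader T)
  simp only [smul_dotProduct, sum_dotProduct, smul_eq_mul] at this
  linarith

lemma sum_abs_rpow_le_of_sparse {d s : ℕ} {q : ℝ} (hq : 0 < q) {g : Fin d → ℝ} (hg : InCube g)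
    (hgs : IsSparse s g) : ∑ i, |g i| ^ q ≤ s := by
  classical
  have hcard : #{i | g i ≠ 0} ≤ s := by
    rwa [IsSparse, supp0, Set.ncard_eq_toFinset_card', Set.toFinset_ofPred] at hgs
  calc ∑ i, |g i| ^ q ≤ ∑ i, if g i ≠ 0 then (1 : ℝ) else 0 := by
        refine sum_le_sum fun i _ => ?_
        split_ifs with h
        · exact rpow_le_one (abs_nonneg _) (abs_le.2 ⟨by linarith [(hg i).1], (hg i).2⟩) hq.le
        · simp [not_not.1 h, zero_rpow hq.ne']
    _ ≤ s := by rw [sum_boole]; exact_mod_cast hcard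

lemma pNorm_sq_le_of_sparse {d s : ℕ} {q : ℝ} (hq : 0 < q) {g : Fin d → ℝ} (hg : InCube g)
    (hgs : IsSparse s g) : pNorm q g ^ 2 ≤ (s : ℝ) ^ (2 / q) := by
  rw [pNorm_sq]
  exact rpow_le_rpow (sum_nonneg fun _ _ => rpow_nonneg (abs_nonneg _) _)
    (sum_abs_rpow_le_of_sparse hq hg hgs) (by positivity)

lemma isStrategy_ftrl_lpReg {d : ℕ} [NeZero d] {p : ℝ} (hp : 0 < p) (η : ℝ) :
    IsStrategy (ftrl (stdSimplex ℝ (Fin d)) (lpReg p) η) := fun t h =>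
  (ftrl_spec (isCompact_stdSimplex ℝ _) ⟨_, single_mem_stdSimplex ℝ 0⟩
    (continuous_lpReg hp).continuousOn η t h).1

theorem gainRegret_ftrl_lpReg_le {d : ℕ} [NeZero d] {p q η M : ℝ} (hp1 : 1 < p) (hp2 : p < 2)
    (hpq : q.HolderConjugate p) (hη : 0 < η) (g : ℕ → Fin d → ℝ)
    (hg : ∀ t, pNorm q (g t) ^ 2 ≤ M) (T : ℕ) :
    gainRegret (ftrl (stdSimplex ℝ (Fin d)) (lpReg p) η) g T
      ≤ 1 / (2 * η) + T * η * M / (2 * (p - 1)) := by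
  set x := play (ftrl (stdSimplex ℝ (Fin d)) (lpReg p) η) g
  have hx : ∀ t, x t ∈ stdSimplex ℝ (Fin d) ∧ IsMaxOn
      (fun y => (η • ∑ k ∈ range t, g k) ⬝ᵥ y - lpReg p y) (stdSimplex ℝ (Fin d)) (x t) := by
    intro t
    have := ftrl_spec (isCompact_stdSimplex ℝ _) ⟨_, single_mem_stdSimplex ℝ 0⟩
      (continuous_lpReg (by linarith : 0 < p)).continuousOn η t fun k => g k
    rwa [Fin.sum_univ_eq_sum_range (fun k => g k)] at this
  have hstab : ∀ t, η * (g t ⬝ᵥ (x (t + 1) - x t)) - (p - 1) / 2 * pNorm p (x (t + 1) - x t) ^ 2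
      ≤ η ^ 2 * M / (2 * (p - 1)) := fun t =>
    (mul_dotProduct_sub_le hpq (by linarith) hη.le _ _).trans <|
      div_le_div_of_nonneg_right (mul_le_mul_of_nonneg_left (hg t) (sq_nonneg η)) (by linarith)
  have hexpert : ∀ i, ∑ t ∈ range T, g t i - ∑ t ∈ range T, g t ⬝ᵥ x t
      ≤ 1 / (2 * η) + T * η * M / (2 * (p - 1)) := by
    intro i
    have h := ftrl_regret_le (D := fun v => (p - 1) / 2 * pNorm p v ^ 2) g x (fun t => (hx t).2)
      (fun t => lpReg_growth_of_isMaxOn hp1 hp2 (hx t).1 (hx t).2 (hx (t + 1)).1) hstab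
      (single_mem_stdSimplex ℝ i) T
    simp only [dotProduct_single, mul_one, lpReg_single (by linarith : p ≠ 0)] at h
    rw [← le_div_iff₀' hη] at h
    calc _ ≤ _ := h
      _ ≤ (1 / 2 + T * (η ^ 2 * M / (2 * (p - 1)))) / η :=
        div_le_div_of_nonneg_right (by linarith [lpReg_nonneg p (x 0)]) hη.le
      _ = _ := by field_simp
  change (⨆ i, ∑ t ∈ range T, g t i) - ∑ t ∈ range T, g t ⬝ᵥ x t ≤ _
  rw [sub_le_iff_le_add]
  exact ciSup_le fun i => by linarith [hexpert i]

theorem gainRegret_ftrl_lpReg_le_sqrt {d : ℕ} [NeZero d] {p q M : ℝ} (hp1 : 1 < p) (hp2 : p < 2)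
    (hpq : q.HolderConjugate p) (hM : 0 < M) {T : ℕ} (hT : 0 < T) (g : ℕ → Fin d → ℝ)
    (hg : ∀ t, pNorm q (g t) ^ 2 ≤ M) :
    gainRegret (ftrl (stdSimplex ℝ (Fin d)) (lpReg p) √((p - 1) / (T * M))) g T
      ≤ √(T * M / (p - 1)) := by
  have hp : 0 < p - 1 := sub_pos.2 hp1
  have hT' : (0 : ℝ) < T := Nat.cast_pos.2 hT
  set η := √((p - 1) / (T * M))
  have hη : 0 < η := sqrt_pos.2 (by positivity)
  have hη2 : η ^ 2 * (T * M) = p - 1 := by rw [sq_sqrt (by positivity)]; field_simp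
  have hsqrt : √(T * M / (p - 1)) = η⁻¹ := by rw [← inv_div, sqrt_inv]
  refine (gainRegret_ftrl_lpReg_le hp1 hp2 hpq hη g hg T).trans (le_of_eq ?_)
  rw [hsqrt]
  field_simp
  linear_combination hη2

end SparseOMD

open SparseOMD

theorem omd_sparse_gains_log_bound_general (d s T : ℕ) (hd : 1 ≤ d) (hs : 3 ≤ s)
    (hT : 1 ≤ T) :
    ∃ σ : ∀ t : ℕ, (Fin t → (Fin d → ℝ)) → (Fin d → ℝ), IsStrategy σ ∧
      ∀ g : ℕ → Fin d → ℝ, (∀ t, InCube (g t) ∧ IsSparse s (g t)) →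
        gainRegret σ g T ≤ Real.sqrt (2 * Real.exp 1 * T * Real.log s) := by
  have : NeZero d := ⟨by omega⟩
  have hs' : (3 : ℝ) ≤ s := by exact_mod_cast hs
  have hlog : 1 < log s := by
    rw [lt_log_iff_exp_lt (by linarith)]
    linarith [exp_one_lt_d9]
  set q := 2 * log s
  set p := q.conjExponent
  have hpq : q.HolderConjugate p := .conjExponent (by linarith)
  have hp2 : p < 2 := by
    rw [show p = q / (q - 1) from rfl, div_lt_iff₀ (by linarith)]; linarith
  have hsq : (s : ℝ) ^ (2 / q) = exp 1 := by
    rw [rpow_def_of_pos (by linarith)]; congr 1; simp only [q]; field_simp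
  refine ⟨ftrl (stdSimplex ℝ (Fin d)) (lpReg p) √((p - 1) / (T * s ^ (2 / q))),
    isStrategy_ftrl_lpReg (by linarith [hpq.symm.lt]) _, fun g hg => ?_⟩
  calc gainRegret _ g T ≤ √(T * s ^ (2 / q) / (p - 1)) :=
        gainRegret_ftrl_lpReg_le_sqrt hpq.symm.lt hp2 hpq (by positivity) hT g
          fun t => pNorm_sq_le_of_sparse (by linarith) (hg t).1 (hg t).2
    _ ≤ √(2 * exp 1 * T * log s) := by
        refine sqrt_le_sqrt ?_
        rw [hsq, div_le_iff₀ hpq.symm.sub_one_pos]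
        have hTe : (0 : ℝ) < T * exp 1 := by positivity
        linear_combination (mul_lt_mul_of_pos_left hpq.symm.lt hTe).le -
          T * exp 1 * hpq.symm.sub_one_mul_conj

/-- For `3 ≤ s ≤ d`, Online Mirror Descent with the tuned `ℓ^p` regularizer
guarantees `R_T ≤ √(2 e T log s)` against `s`-sparse gains in `[0,1]^d`. -/
theorem omd_sparse_gains_log_bound (d s T : ℕ) (hd : 1 ≤ d) (hs : 3 ≤ s) (hsd : s ≤ d)
    (hT : 1 ≤ T) :
    ∃ σ : ∀ t : ℕ, (Fin t → (Fin d → ℝ)) → (Fin d → ℝ), IsStrategy σ ∧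
      ∀ g : ℕ → Fin d → ℝ, (∀ t, InCube (g t) ∧ IsSparse s (g t)) →
        gainRegret σ g T ≤ Real.sqrt (2 * Real.exp 1 * T * Real.log s) :=
  omd_sparse_gains_log_bound_general d s T hd hs hT

end
end

section
/- Let d ≥ 1, s an integer with 1 ≤ s ≤ 2 and s ≤ d, and T ≥ 1. There exists a full-information strategy (Online Mirror Descent with the Euclidean regularizer h_2(x) = ½‖x‖_2² on Δ_d, suitably tuned) such that for every sequence g_1,…,g_T of s-sparse gain vectors in [0,1]^d, the regret satisfies R_T ≤ √(sT). -/
open Finset Filter MeasureTheory ProbabilityTheory Real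

noncomputable section

/-!
Online mirror descent with the regularizer `½‖x‖²` is projected gradient ascent
`x_{t+1} = Π_Δ (x_t + η g_t)` in `EuclideanSpace ℝ (Fin d)`. The Euclidean projection onto a
closed convex set moves no point farther from any point of the set, so expanding
`‖x_t + η g_t - u‖²` gives `2η⟪g_t, u - x_t⟫ ≤ ‖x_t - u‖² - ‖x_{t+1} - u‖² + η²‖g_t‖²`, which
telescopes. Started at the barycentre, `‖x_0 - u‖² = ‖u‖² - 1/d ≤ 1` for every `u ∈ Δ_d`, and an
`s`-sparse gain vector in `[0,1]^d` has `‖g‖² ≤ s`; so the regret against every vertex is at most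
`1/(2η) + ηsT/2 = √(sT)` for `η = 1/√(sT)`.
-/

open scoped RealInnerProductSpace

section ProjectedGradient

variable {E : Type*} [NormedAddCommGroup E] [InnerProductSpace ℝ E]

theorem exists_mem_forall_norm_sub_le_norm_sub {K : Set E} (hne : K.Nonempty)
    (hc : IsComplete K) (hK : Convex ℝ K) (y : E) :
    ∃ v ∈ K, ∀ u ∈ K, ‖v - u‖ ≤ ‖y - u‖ := by
  obtain ⟨v, hv, hmin⟩ := exists_norm_eq_iInf_of_complete_convex hne hc hK y
  have hvar := (norm_eq_iInf_iff_real_inner_le_zero hK hv).1 hmin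
  refine ⟨v, hv, fun u hu => ?_⟩
  have hsplit : ‖y - u‖ ^ 2 = ‖y - v‖ ^ 2 + 2 * ⟪y - v, v - u⟫ + ‖v - u‖ ^ 2 := by
    rw [← norm_add_sq_real, sub_add_sub_cancel]
  have hobtuse : 0 ≤ ⟪y - v, v - u⟫ := by
    rw [← neg_sub u v, inner_neg_right]
    linarith [hvar u hu]
  rw [← pow_le_pow_iff_left₀ (norm_nonneg _) (norm_nonneg _) two_ne_zero]
  nlinarith [sq_nonneg ‖y - v‖]

theorem two_mul_inner_sub_le_of_norm_sub_le {x x' g u : E} {η : ℝ}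
    (h : ‖x' - u‖ ≤ ‖x + η • g - u‖) :
    2 * η * ⟪g, u - x⟫ ≤ ‖x - u‖ ^ 2 - ‖x' - u‖ ^ 2 + η ^ 2 * ‖g‖ ^ 2 := by
  have hexpand : ‖x + η • g - u‖ ^ 2 = ‖x - u‖ ^ 2 - 2 * η * ⟪g, u - x⟫ + η ^ 2 * ‖g‖ ^ 2 := by
    rw [add_sub_right_comm, norm_add_sq_real, real_inner_smul_right, norm_smul, mul_pow,
      Real.norm_eq_abs, sq_abs, ← neg_sub u x, inner_neg_left, real_inner_comm]
    ring
  nlinarith [pow_le_pow_left₀ (norm_nonneg _) h 2]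

theorem sum_inner_sub_le_of_projected_gradient {x g : ℕ → E} {u : E} {η G : ℝ} (hη : 0 < η)
    (hstep : ∀ t, ‖x (t + 1) - u‖ ≤ ‖x t + η • g t - u‖) (hg : ∀ t, ‖g t‖ ^ 2 ≤ G) (T : ℕ) :
    ∑ t ∈ range T, ⟪g t, u - x t⟫ ≤ ‖x 0 - u‖ ^ 2 / (2 * η) + η * T * G / 2 := by
  have htelescope : 2 * η * ∑ t ∈ range T, ⟪g t, u - x t⟫ ≤
      ‖x 0 - u‖ ^ 2 - ‖x T - u‖ ^ 2 + T * (η ^ 2 * G) :=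
    calc 2 * η * ∑ t ∈ range T, ⟪g t, u - x t⟫
        ≤ ∑ t ∈ range T, (‖x t - u‖ ^ 2 - ‖x (t + 1) - u‖ ^ 2 + η ^ 2 * G) := by
          rw [mul_sum]
          refine sum_le_sum fun t _ => ?_
          have := two_mul_inner_sub_le_of_norm_sub_le (hstep t)
          nlinarith [hg t, sq_nonneg η]
      _ = ‖x 0 - u‖ ^ 2 - ‖x T - u‖ ^ 2 + T * (η ^ 2 * G) := by
          rw [sum_add_distrib, sum_range_sub' (fun t => ‖x t - u‖ ^ 2), sum_const, card_range,
            nsmul_eq_mul]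
  calc ∑ t ∈ range T, ⟪g t, u - x t⟫
      ≤ (‖x 0 - u‖ ^ 2 + T * (η ^ 2 * G)) / (2 * η) := by
        rw [le_div_iff₀ (by positivity)]
        nlinarith [sq_nonneg ‖x T - u‖]
    _ = ‖x 0 - u‖ ^ 2 / (2 * η) + η * T * G / 2 := by
        field_simp

theorem sum_inner_sub_le_sqrt_of_projected_gradient {x g : ℕ → E} {u : E} {G : ℝ} {T : ℕ}
    (hGT : 0 < G * T) (hx₀ : ‖x 0 - u‖ ≤ 1)
    (hstep : ∀ t, ‖x (t + 1) - u‖ ≤ ‖x t + (√(G * T))⁻¹ • g t - u‖) (hg : ∀ t, ‖g t‖ ^ 2 ≤ G) :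
    ∑ t ∈ range T, ⟪g t, u - x t⟫ ≤ √(G * T) := by
  have hroot : 0 < √(G * T) := sqrt_pos.2 hGT
  refine (sum_inner_sub_le_of_projected_gradient (inv_pos.2 hroot) hstep hg T).trans ?_
  have hsq : ‖x 0 - u‖ ^ 2 ≤ 1 := pow_le_one₀ (norm_nonneg _) hx₀
  have hGT_eq : √(G * T) ^ 2 = G * T := sq_sqrt hGT.le
  calc ‖x 0 - u‖ ^ 2 / (2 * (√(G * T))⁻¹) + (√(G * T))⁻¹ * T * G / 2
      = √(G * T) * (‖x 0 - u‖ ^ 2 + 1) / 2 := by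
        field_simp
        rw [hGT_eq]
        ring
    _ ≤ √(G * T) := by nlinarith

end ProjectedGradient

section EuclideanSimplex

variable {ι : Type*} [Fintype ι]

def euclideanSimplex (ι : Type*) [Fintype ι] : Set (EuclideanSpace ℝ ι) :=
  WithLp.ofLp ⁻¹' stdSimplex ℝ ι

theorem convex_euclideanSimplex : Convex ℝ (euclideanSimplex ι) :=
  (convex_stdSimplex ℝ ι).linear_preimage (WithLp.linearEquiv 2 ℝ (ι → ℝ)).toLinearMap

theorem isClosed_euclideanSimplex : IsClosed (euclideanSimplex ι) :=
  (isClosed_stdSimplex ℝ ι).preimage (PiLp.continuous_ofLp 2 _)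

theorem single_mem_euclideanSimplex [DecidableEq ι] (i : ι) :
    EuclideanSpace.single i (1 : ℝ) ∈ euclideanSimplex ι := by
  simpa [euclideanSimplex] using single_mem_stdSimplex ℝ i

def simplexCenter (ι : Type*) [Fintype ι] : EuclideanSpace ℝ ι :=
  WithLp.toLp 2 fun _ => (Fintype.card ι : ℝ)⁻¹

theorem simplexCenter_mem [Nonempty ι] : simplexCenter ι ∈ euclideanSimplex ι := by
  refine ⟨fun _ => by simp [simplexCenter], ?_⟩
  simp [simplexCenter]

theorem norm_simplexCenter_sub_le_one [Nonempty ι] {u : EuclideanSpace ℝ ι}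
    (hu : u ∈ euclideanSimplex ι) : ‖simplexCenter ι - u‖ ≤ 1 := by
  obtain ⟨hnonneg, hsum⟩ := hu
  have hcard : (Fintype.card ι : ℝ) * (Fintype.card ι : ℝ)⁻¹ ^ 2 = (Fintype.card ι : ℝ)⁻¹ := by
    field_simp
  have hsq_le : ∑ i, u i ^ 2 ≤ 1 := by
    refine hsum ▸ sum_le_sum fun i _ => ?_
    have := (mem_Icc_of_mem_stdSimplex ⟨hnonneg, hsum⟩ i).2
    nlinarith [hnonneg i]
  have hexpand : ‖simplexCenter ι - u‖ ^ 2 = ∑ i, u i ^ 2 - (Fintype.card ι : ℝ)⁻¹ := by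
    simp only [EuclideanSpace.real_norm_sq_eq, simplexCenter, WithLp.ofLp_sub, Pi.sub_apply]
    simp_rw [sub_sq, sum_add_distrib, sum_sub_distrib, ← mul_sum, hsum]
    simp only [sum_const, card_univ, nsmul_eq_mul]
    linear_combination hcard
  have hc : 0 ≤ (Fintype.card ι : ℝ)⁻¹ := by positivity
  rw [← pow_le_one_iff_of_nonneg (norm_nonneg _) two_ne_zero]
  linarith

theorem inner_toLp_single_sub [DecidableEq ι] (w : ι → ℝ) (i : ι) (y : EuclideanSpace ℝ ι) :
    ⟪WithLp.toLp 2 w, EuclideanSpace.single i 1 - y⟫ = w i - ∑ j, w j * y j := by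
  simp [inner_sub_right, PiLp.inner_apply, mul_comm]

end EuclideanSimplex

theorem sum_sq_le_supp0 {d : ℕ} {w : Fin d → ℝ} (hw : ∀ i, |w i| ≤ 1) :
    ∑ i, w i ^ 2 ≤ supp0 w := by
  classical
  have hsupp : supp0 w = #{i | w i ≠ 0} := by
    rw [supp0, Set.ncard_eq_toFinset_card', Set.toFinset_ofPred]
  rw [hsupp, ← sum_filter_ne_zero]
  simp_rw [ne_eq, pow_eq_zero_iff two_ne_zero]
  refine (sum_le_sum (g := fun _ => (1 : ℝ)) fun i _ => ?_).trans (by simp)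
  simpa [sq_abs] using pow_le_one₀ (abs_nonneg _) (hw i) (n := 2)

theorem norm_toLp_sq_le_of_sparse {d s : ℕ} {w : Fin d → ℝ} (hcube : InCube w)
    (hsparse : IsSparse s w) :
    ‖WithLp.toLp 2 w‖ ^ 2 ≤ s := by
  rw [EuclideanSpace.real_norm_sq_eq]
  refine (sum_sq_le_supp0 fun i => ?_).trans (by exact_mod_cast hsparse)
  rw [abs_le]
  constructor <;> linarith [(hcube i).1, (hcube i).2]

section ProjectedGradientStrategy

variable {d : ℕ}

def projGradStrategy (P : EuclideanSpace ℝ (Fin d) → EuclideanSpace ℝ (Fin d)) (η : ℝ)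
    (x₀ : EuclideanSpace ℝ (Fin d)) : ∀ t : ℕ, (Fin t → Fin d → ℝ) → EuclideanSpace ℝ (Fin d)
  | 0, _ => x₀
  | t + 1, h =>
    P (projGradStrategy P η x₀ t (fun k => h k.castSucc) + η • WithLp.toLp 2 (h (Fin.last t)))

theorem projGradStrategy_mem {P : EuclideanSpace ℝ (Fin d) → EuclideanSpace ℝ (Fin d)}
    {K : Set (EuclideanSpace ℝ (Fin d))} {η : ℝ} {x₀ : EuclideanSpace ℝ (Fin d)} (hx₀ : x₀ ∈ K)
    (hP : ∀ y, P y ∈ K) : ∀ t h, projGradStrategy P η x₀ t h ∈ K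
  | 0, _ => hx₀
  | _ + 1, _ => hP _

theorem gainRegret_le_of_forall_sum_le [NeZero d] (σ : ∀ t : ℕ, (Fin t → Fin d → ℝ) → Fin d → ℝ)
    (g : ℕ → Fin d → ℝ) (T : ℕ) {B : ℝ}
    (h : ∀ i, ∑ t ∈ range T, (g t i - ∑ j, g t j * play σ g t j) ≤ B) :
    gainRegret σ g T ≤ B := by
  rw [gainRegret, sub_le_iff_le_add]
  refine ciSup_le fun i => ?_
  have hi := h i
  rw [sum_sub_distrib] at hi
  linarith

end ProjectedGradientStrategy

theorem omd_sparse_gains_small_s_general (d s T : ℕ) (hd : 1 ≤ d) (hs1 : 1 ≤ s) (hT : 1 ≤ T) :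
    ∃ σ : ∀ t : ℕ, (Fin t → (Fin d → ℝ)) → (Fin d → ℝ), IsStrategy σ ∧
      ∀ g : ℕ → Fin d → ℝ, (∀ t, InCube (g t) ∧ IsSparse s (g t)) →
        gainRegret σ g T ≤ Real.sqrt (s * T) := by
  have : NeZero d := ⟨by omega⟩
  choose P hPK hP using exists_mem_forall_norm_sub_le_norm_sub ⟨_, simplexCenter_mem⟩
    isClosed_euclideanSimplex.isComplete (convex_euclideanSimplex (ι := Fin d))
  let x := projGradStrategy P (√(s * T))⁻¹ (simplexCenter (Fin d))
  refine ⟨fun t h => WithLp.ofLp (x t h),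
    fun t h => projGradStrategy_mem simplexCenter_mem hPK t h, fun g hg => ?_⟩
  refine gainRegret_le_of_forall_sum_le _ g T fun i => ?_
  have hsT : (0 : ℝ) < s * T := mul_pos (Nat.cast_pos.2 hs1) (Nat.cast_pos.2 hT)
  have hbound := sum_inner_sub_le_sqrt_of_projected_gradient (x := fun t => x t fun k => g k)
    (g := fun t => WithLp.toLp 2 (g t)) (u := EuclideanSpace.single i 1) (T := T) hsT
    (norm_simplexCenter_sub_le_one (single_mem_euclideanSimplex i))
    (fun _ => hP _ _ (single_mem_euclideanSimplex i))
    (fun t => norm_toLp_sq_le_of_sparse (hg t).1 (hg t).2)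
  simp only [inner_toLp_single_sub] at hbound
  exact hbound

/-- For `s ∈ {1,2}`, Online Mirror Descent with the Euclidean regularizer,
suitably tuned, guarantees `R_T ≤ √(sT)` against `s`-sparse gains in `[0,1]^d`. -/
theorem omd_sparse_gains_small_s (d s T : ℕ) (hd : 1 ≤ d) (hs1 : 1 ≤ s) (hs2 : s ≤ 2)
    (hsd : s ≤ d) (hT : 1 ≤ T) :
    ∃ σ : ∀ t : ℕ, (Fin t → (Fin d → ℝ)) → (Fin d → ℝ), IsStrategy σ ∧
      ∀ g : ℕ → Fin d → ℝ, (∀ t, InCube (g t) ∧ IsSparse s (g t)) →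
        gainRegret σ g T ≤ Real.sqrt (s * T) :=
  omd_sparse_gains_small_s_general d s T hd hs1 hT

end
end

section
/- Let d ≥ 1, η > 0 and T ≥ 1. For every sequence of loss vectors ℓ_1,…,ℓ_T in [0,1]^d, the Exponential Weight Algorithm with parameter −η guarantees R_T ≤ (log d)/(1 − e^{−η}) + (η/(1 − e^{−η}) − 1) · L_T^*, where L_T^* = min_{i ∈ [d]} Σ_{t=1}^T ℓ_t^{(i)}. -/
/-!
With cumulative losses `L_t` and potential `Φ_t = ∑ᵢ exp (-η L_t⁽ⁱ⁾)`, the EWA play is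
`x_t = exp (-η L_t) / Φ_t`. Since `exp (-η u) ≤ 1 - (1 - e^{-η}) u` on `[0,1]` by convexity,
`log Φ_{t+1} ≤ log Φ_t - (1 - e^{-η}) ⟨ℓ_t, x_t⟩`. Telescoping from `Φ_0 = d` and bounding
`Φ_T ≥ exp (-η L_T^*)` gives `(1 - e^{-η}) ∑_t ⟨ℓ_t, x_t⟩ ≤ log d + η L_T^*`, which rearranges
to the claim.
-/

open Finset Filter MeasureTheory ProbabilityTheory Real

noncomputable section

/-- Regret after `T` stages when outcomes are losses. -/
def lossRegret {d : ℕ} (σ : ∀ t : ℕ, (Fin t → (Fin d → ℝ)) → (Fin d → ℝ))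
    (ℓ : ℕ → Fin d → ℝ) (T : ℕ) : ℝ :=
  (∑ t ∈ Finset.range T, ∑ i, ℓ t i * play σ ℓ t i) -
    ⨅ i, ∑ t ∈ Finset.range T, ℓ t i

/-- The Exponential Weight Algorithm with parameter `-η`, viewed as a full-information
strategy: `x_t^{(i)} ∝ exp(-η ∑_{k<t} ℓ_k^{(i)})`. -/
def ewa (d : ℕ) (η : ℝ) : ∀ t : ℕ, (Fin t → (Fin d → ℝ)) → (Fin d → ℝ) :=
  fun t h i => Real.exp (-η * ∑ k : Fin t, h k i) / ∑ j, Real.exp (-η * ∑ k : Fin t, h k j)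

theorem exp_neg_mul_le_one_sub_mul (η : ℝ) {x : ℝ} (hx : x ∈ Set.Icc (0 : ℝ) 1) :
    exp (-η * x) ≤ 1 - (1 - exp (-η)) * x := by
  have h := convexOn_exp.2 (Set.mem_univ 0) (Set.mem_univ (-η)) (sub_nonneg.2 hx.2) hx.1
    (sub_add_cancel 1 x)
  simp only [smul_eq_mul, mul_zero, zero_add, exp_zero, mul_one, mul_comm x] at h
  linarith

theorem log_sum_mul_exp_neg_le {ι : Type*} [Fintype ι] [Nonempty ι] (η : ℝ) {w x : ι → ℝ}
    (hw : ∀ i, 0 < w i) (hx : ∀ i, x i ∈ Set.Icc (0 : ℝ) 1) :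
    log (∑ i, w i * exp (-η * x i)) ≤
      log (∑ i, w i) - (1 - exp (-η)) * ∑ i, x i * (w i / ∑ j, w j) := by
  set W := ∑ j, w j
  set c := 1 - exp (-η)
  have hW : 0 < W := sum_pos (fun i _ => hw i) univ_nonempty
  have hpos : 0 < ∑ i, w i * exp (-η * x i) :=
    sum_pos (fun i _ => mul_pos (hw i) (exp_pos _)) univ_nonempty
  have hconvex : ∑ i, w i * exp (-η * x i) ≤ ∑ i, w i * (1 - c * x i) :=
    sum_le_sum fun i _ => mul_le_mul_of_nonneg_left (exp_neg_mul_le_one_sub_mul η (hx i)) (hw i).le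
  have hratio : (∑ i, w i * (1 - c * x i)) / W = 1 - c * ∑ i, x i * (w i / W) := by
    simp only [mul_sub, mul_one, sum_sub_distrib, sub_div, mul_sum]
    rw [div_self hW.ne', sum_div]
    congr 1
    exact sum_congr rfl fun i _ => by ring
  have hB : 0 < ∑ i, w i * (1 - c * x i) := hpos.trans_le hconvex
  calc log (∑ i, w i * exp (-η * x i))
      ≤ log (∑ i, w i * (1 - c * x i)) := log_le_log hpos hconvex
    _ = log W + log ((∑ i, w i * (1 - c * x i)) / W) := by
        rw [log_div hB.ne' hW.ne']; ring
    _ ≤ log W + ((∑ i, w i * (1 - c * x i)) / W - 1) := by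
        gcongr; exact log_le_sub_one_of_pos (div_pos hB hW)
    _ = log W - c * ∑ i, x i * (w i / W) := by
        rw [hratio]; ring

section Potential

variable {ι : Type*} [Fintype ι] (η : ℝ) (ℓ : ℕ → ι → ℝ)

def cumLoss (t : ℕ) (i : ι) : ℝ := ∑ k ∈ range t, ℓ k i

def ewaPotential (t : ℕ) : ℝ := ∑ i, exp (-η * cumLoss ℓ t i)

theorem ewaPotential_zero : ewaPotential η ℓ 0 = Fintype.card ι := by
  simp [ewaPotential, cumLoss]

theorem exp_neg_mul_cumLoss_le_ewaPotential (t : ℕ) (i : ι) :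
    exp (-η * cumLoss ℓ t i) ≤ ewaPotential η ℓ t :=
  single_le_sum (f := fun j => exp (-η * cumLoss ℓ t j)) (fun _ _ => (exp_pos _).le) (mem_univ i)

theorem ewaPotential_succ (t : ℕ) :
    ewaPotential η ℓ (t + 1) = ∑ i, exp (-η * cumLoss ℓ t i) * exp (-η * ℓ t i) := by
  simp only [ewaPotential, cumLoss, sum_range_succ, ← exp_add, mul_add]

variable [Nonempty ι]

theorem log_ewaPotential_succ_le (t : ℕ) (hℓ : ∀ i, ℓ t i ∈ Set.Icc (0 : ℝ) 1) :
    log (ewaPotential η ℓ (t + 1)) ≤ log (ewaPotential η ℓ t) -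
      (1 - exp (-η)) * ∑ i, ℓ t i * (exp (-η * cumLoss ℓ t i) / ewaPotential η ℓ t) := by
  rw [ewaPotential_succ]
  exact log_sum_mul_exp_neg_le η (fun i => exp_pos _) hℓ

theorem mul_sum_ewa_loss_le (T : ℕ) (hℓ : ∀ t i, ℓ t i ∈ Set.Icc (0 : ℝ) 1) (i : ι) :
    (1 - exp (-η)) * ∑ t ∈ range T, ∑ j, ℓ t j * (exp (-η * cumLoss ℓ t j) / ewaPotential η ℓ t)
      ≤ log (Fintype.card ι) + η * cumLoss ℓ T i := by
  have htelescope := sum_le_sum fun t (_ : t ∈ range T) =>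
    le_sub_comm.1 (log_ewaPotential_succ_le η ℓ t (hℓ t))
  rw [sum_range_sub' (fun t => log (ewaPotential η ℓ t)), ← mul_sum, ewaPotential_zero] at htelescope
  have hfinal : -η * cumLoss ℓ T i ≤ log (ewaPotential η ℓ T) := by
    rw [← log_exp (-η * cumLoss ℓ T i)]
    exact log_le_log (exp_pos _) (exp_neg_mul_cumLoss_le_ewaPotential η ℓ T i)
  linarith

end Potential

theorem play_ewa {d : ℕ} (η : ℝ) (ℓ : ℕ → Fin d → ℝ) (t : ℕ) (i : Fin d) :
    play (ewa d η) ℓ t i = exp (-η * cumLoss ℓ t i) / ewaPotential η ℓ t := by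
  have hcum (j : Fin d) : ∑ k : Fin t, ℓ k j = cumLoss ℓ t j :=
    Fin.sum_univ_eq_sum_range (ℓ · j) t
  simp only [play, ewa, hcum, ewaPotential]

theorem ewa_small_loss_bound_general (d T : ℕ) (hd : 1 ≤ d) (η : ℝ) (hη : 0 < η)
    (ℓ : ℕ → Fin d → ℝ) (hℓ : ∀ t, InCube (ℓ t)) :
    lossRegret (ewa d η) ℓ T ≤
      Real.log d / (1 - Real.exp (-η)) +
        (η / (1 - Real.exp (-η)) - 1) * ⨅ i, ∑ t ∈ Finset.range T, ℓ t i := by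
  have : Nonempty (Fin d) := Fin.pos_iff_nonempty.1 hd
  have hc : 0 < 1 - exp (-η) := sub_pos.2 (exp_lt_one_iff.2 (neg_neg_of_pos hη))
  obtain ⟨i₀, hi₀⟩ := exists_eq_ciInf_of_finite (f := fun i => ∑ t ∈ range T, ℓ t i)
  have hbound := mul_sum_ewa_loss_le η ℓ T hℓ i₀
  simp only [Fintype.card_fin, ← play_ewa] at hbound
  have hrhs : log d / (1 - exp (-η)) + (η / (1 - exp (-η)) - 1) * cumLoss ℓ T i₀ =
      (log d + η * cumLoss ℓ T i₀) / (1 - exp (-η)) - cumLoss ℓ T i₀ := by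
    field_simp
    ring
  rw [lossRegret, ← hi₀]
  change _ - cumLoss ℓ T i₀ ≤ _ + _ * cumLoss ℓ T i₀
  rw [hrhs, sub_le_sub_iff_right, le_div_iff₀' hc]
  exact hbound

/-- Regret bound for the Exponential Weight Algorithm with losses in
`[0,1]^d`, in terms of the best cumulative loss `L_T^*`. -/
theorem ewa_small_loss_bound (d T : ℕ) (hd : 1 ≤ d) (hT : 1 ≤ T) (η : ℝ) (hη : 0 < η)
    (ℓ : ℕ → Fin d → ℝ) (hℓ : ∀ t, InCube (ℓ t)) :
    lossRegret (ewa d η) ℓ T ≤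
      Real.log d / (1 - Real.exp (-η)) +
        (η / (1 - Real.exp (-η)) - 1) * ⨅ i, ∑ t ∈ Finset.range T, ℓ t i :=
  ewa_small_loss_bound_general d T hd η hη ℓ hℓ

end
end

section
/- Let d ≥ 2 and T ≥ 1. There exists a full-information strategy (not depending on any sparsity parameter) such that for every sequence ℓ_1,…,ℓ_T of loss vectors in [0,1]^d with s* := max_{1 ≤ t ≤ T} ‖ℓ_t‖_0 ≥ 1, the regret satisfies R_T ≤ 4√(T s* log d / d) + ⌈log₂ s*⌉ · (log d)/2 + 5 s* √(log d / (dT)). -/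
open Finset Filter MeasureTheory ProbabilityTheory Real

noncomputable section

/-!
Play the exponential-weights distribution `p_t` (rate `η_t`, on the cumulative losses) shrunk
towards the uniform distribution, `x_t = γ p_t + (1 - γ) / d` with `γ = (1 - e^{-η}) / η`.
Since `e^{-η z} ≤ 1 - (1 - e^{-η}) z` on `[0,1]`, the potential `η⁻¹ log (d⁻¹ ∑ e^{-η L_i})` drops
by at least `γ ⟨ℓ_t, p_t⟩` in each round, with no second-order term; as the potential is
nondecreasing in `η`, letting the rate decrease costs nothing, so
`∑ γ_t ⟨ℓ_t, p_t⟩ ≤ min_i L_T(i) + log d / η_T`. The uniform part costs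
`(1 - γ) ‖ℓ_t‖₁ / d ≤ η_t ‖ℓ_t‖₀ / (2d)`, which is where sparsity enters. With
`η_t = d √(log d / (dT)) / √m_t`, `m_t` the largest sparsity seen before round `t`, the regret is
at most `(3/2) √(T s* log d / d) + (s*/2) √(log d / (dT))`.
-/

lemma exp_mul_le_chord (x : ℝ) {z : ℝ} (hz₀ : 0 ≤ z) (hz₁ : z ≤ 1) :
    exp (x * z) ≤ 1 + (exp x - 1) * z := by
  have h := convexOn_exp.2 (Set.mem_univ 0) (Set.mem_univ x) (sub_nonneg.2 hz₁) hz₀ (by ring)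
  simp only [smul_eq_mul, mul_zero, zero_add, exp_zero, mul_one] at h
  rw [mul_comm x z]
  linarith

def mixWeight (η : ℝ) : ℝ := (1 - exp (-η)) / η

lemma mixWeight_nonneg {η : ℝ} (hη : 0 ≤ η) : 0 ≤ mixWeight η :=
  div_nonneg (sub_nonneg.2 (exp_le_one_iff.2 (neg_nonpos.2 hη))) hη

lemma mixWeight_le_one {η : ℝ} (hη : 0 ≤ η) : mixWeight η ≤ 1 := by
  rcases hη.eq_or_lt with rfl | hη
  · simp [mixWeight]
  rw [mixWeight, div_le_one hη]
  linarith [one_sub_le_exp_neg η]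

lemma one_sub_mixWeight_le {η : ℝ} (hη : 0 < η) : 1 - mixWeight η ≤ η / 2 := by
  have hquad : exp (-η) ≤ 1 - η + η ^ 2 / 2 := by
    have hq : 0 < 1 - η + η ^ 2 / 2 := by nlinarith [sq_nonneg (η - 1)]
    rw [exp_neg, inv_le_iff_one_le_mul₀ (exp_pos η)]
    nlinarith [mul_le_mul_of_nonneg_left (quadratic_le_exp_of_nonneg hη.le) hq.le, sq_nonneg η]
  rw [mixWeight, sub_le_iff_le_add, ← sub_le_iff_le_add', le_div_iff₀ hη]
  nlinarith

section ExpWeights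

variable {ι : Type*} [Fintype ι]

def expWeightSum (η : ℝ) (L : ι → ℝ) : ℝ := ∑ i, exp (-η * L i)

def expWeights (η : ℝ) (L : ι → ℝ) (i : ι) : ℝ := exp (-η * L i) / expWeightSum η L

def expPotential (η : ℝ) (L : ι → ℝ) : ℝ := log (expWeightSum η L / Fintype.card ι) / η

def mixedAction (η : ℝ) (L : ι → ℝ) (i : ι) : ℝ :=
  mixWeight η * expWeights η L i + (1 - mixWeight η) / Fintype.card ι

lemma expPotential_zero (η : ℝ) : expPotential η (0 : ι → ℝ) = 0 := by
  simp [expPotential, expWeightSum]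

lemma sum_mul_mixedAction (η : ℝ) (L ℓ : ι → ℝ) :
    ∑ i, ℓ i * mixedAction η L i =
      mixWeight η * ∑ i, ℓ i * expWeights η L i +
        (1 - mixWeight η) * (∑ i, ℓ i) / Fintype.card ι := by
  simp only [mixedAction, mul_add, sum_add_distrib, mul_sum, sum_div]
  congr 1 <;> exact sum_congr rfl fun _ _ => by ring

variable [Nonempty ι]

lemma expWeightSum_pos (η : ℝ) (L : ι → ℝ) : 0 < expWeightSum η L :=
  sum_pos (fun _ _ => exp_pos _) univ_nonempty

lemma expWeights_pos (η : ℝ) (L : ι → ℝ) (i : ι) : 0 < expWeights η L i :=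
  div_pos (exp_pos _) (expWeightSum_pos η L)

lemma sum_expWeights (η : ℝ) (L : ι → ℝ) : ∑ i, expWeights η L i = 1 := by
  unfold expWeights
  rw [← sum_div]
  exact div_self (expWeightSum_pos η L).ne'

lemma expWeightSum_add (η : ℝ) (L ℓ : ι → ℝ) :
    expWeightSum η (L + ℓ) = expWeightSum η L * ∑ i, expWeights η L i * exp (-η * ℓ i) := by
  have hW := (expWeightSum_pos η L).ne'
  rw [mul_sum]
  refine sum_congr rfl fun i _ => ?_
  rw [expWeights, Pi.add_apply, mul_add, exp_add]
  field_simp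

/-- By the power-mean inequality. -/
lemma expPotential_mono {a b : ℝ} (ha : 0 < a) (hab : a ≤ b) (L : ι → ℝ) :
    expPotential a L ≤ expPotential b L := by
  have hb := ha.trans_le hab
  have hd : (0 : ℝ) < Fintype.card ι := by exact_mod_cast Fintype.card_pos
  have hmean : ∀ η, ∑ i, (Fintype.card ι : ℝ)⁻¹ * exp (-η * L i) =
      expWeightSum η L / Fintype.card ι := fun η => by
    rw [expWeightSum, sum_div]; simp only [inv_mul_eq_div]
  have hpow := rpow_arith_mean_le_arith_mean_rpow univ (fun _ => (Fintype.card ι : ℝ)⁻¹)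
    (fun i => exp (-a * L i)) (fun _ _ => by positivity) (by simp [hd.ne'])
    (fun _ _ => (exp_pos _).le) ((one_le_div ha).2 hab)
  simp only [← exp_mul, show ∀ x, -a * x * (b / a) = -b * x from fun x => by field_simp,
    hmean] at hpow
  have hWa := div_pos (expWeightSum_pos a L) hd
  have hlog := log_le_log (rpow_pos_of_pos hWa _) hpow
  rw [log_rpow hWa, div_mul_eq_mul_div, div_le_iff₀ ha] at hlog
  rw [expPotential, expPotential, div_le_div_iff₀ ha hb]
  linarith

lemma mixWeight_mul_sum_le_expPotential_sub {η : ℝ} (hη : 0 < η) (L ℓ : ι → ℝ)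
    (hℓ : ∀ i, ℓ i ∈ Set.Icc (0 : ℝ) 1) :
    mixWeight η * ∑ i, ℓ i * expWeights η L i ≤ expPotential η L - expPotential η (L + ℓ) := by
  set S := ∑ i, ℓ i * expWeights η L i
  have hd : (0 : ℝ) < Fintype.card ι := by exact_mod_cast Fintype.card_pos
  have hchord : ∑ i, expWeights η L i * exp (-η * ℓ i) ≤ 1 - (1 - exp (-η)) * S := by
    calc ∑ i, expWeights η L i * exp (-η * ℓ i)
        ≤ ∑ i, expWeights η L i * (1 + (exp (-η) - 1) * ℓ i) :=
          sum_le_sum fun i _ => mul_le_mul_of_nonneg_left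
            (exp_mul_le_chord _ (hℓ i).1 (hℓ i).2) (expWeights_pos η L i).le
      _ = ∑ i, (expWeights η L i - (1 - exp (-η)) * (ℓ i * expWeights η L i)) :=
          sum_congr rfl fun _ _ => by ring
      _ = 1 - (1 - exp (-η)) * S := by rw [sum_sub_distrib, sum_expWeights, ← mul_sum]
  have hpos : 0 < ∑ i, expWeights η L i * exp (-η * ℓ i) :=
    sum_pos (fun i _ => mul_pos (expWeights_pos η L i) (exp_pos _)) univ_nonempty
  have hlog : log (expWeightSum η (L + ℓ) / Fintype.card ι) ≤
      log (expWeightSum η L / Fintype.card ι) - (1 - exp (-η)) * S := by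
    rw [expWeightSum_add, mul_div_right_comm,
      log_mul (div_pos (expWeightSum_pos η L) hd).ne' hpos.ne']
    linarith [log_le_sub_one_of_pos hpos]
  rw [expPotential, expPotential, mixWeight, ← sub_div, div_mul_eq_mul_div,
    div_le_div_iff_of_pos_right hη]
  linarith

lemma neg_sub_le_expPotential {η : ℝ} (hη : 0 < η) (L : ι → ℝ) (i : ι) :
    -L i - log (Fintype.card ι) / η ≤ expPotential η L := by
  have hd : (0 : ℝ) < Fintype.card ι := by exact_mod_cast Fintype.card_pos
  have h : -η * L i - log (Fintype.card ι) ≤ log (expWeightSum η L / Fintype.card ι) := by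
    rw [← log_exp (-η * L i), ← log_div (exp_pos _).ne' hd.ne']
    exact log_le_log (by positivity) (div_le_div_of_nonneg_right
      (single_le_sum (f := fun j => exp (-η * L j)) (fun j _ => (exp_pos _).le) (mem_univ i))
      hd.le)
  rw [expPotential, le_div_iff₀ hη, sub_mul, div_mul_cancel₀ _ hη.ne']
  linarith

variable {η : ℕ → ℝ} {ℓ : ℕ → ι → ℝ}

lemma sum_mixWeight_mul_add_expPotential_nonpos (hη : ∀ t, 0 < η t) (hanti : Antitone η)
    (hℓ : ∀ t i, ℓ t i ∈ Set.Icc (0 : ℝ) 1) (n : ℕ) :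
    ∑ t ∈ range n, mixWeight (η t) * ∑ i, ℓ t i * expWeights (η t) (∑ u ∈ range t, ℓ u) i
      + expPotential (η n) (∑ u ∈ range n, ℓ u) ≤ 0 := by
  induction n with
  | zero => simp [expPotential_zero]
  | succ n ih =>
    have hstep := mixWeight_mul_sum_le_expPotential_sub (hη n) (∑ u ∈ range n, ℓ u) (ℓ n) (hℓ n)
    have hmono := expPotential_mono (hη (n + 1)) (hanti n.le_succ) (∑ u ∈ range (n + 1), ℓ u)
    rw [← sum_range_succ] at hstep
    rw [sum_range_succ]
    linarith

lemma sum_mixWeight_mul_sub_le_iInf (hη : ∀ t, 0 < η t) (hanti : Antitone η)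
    (hℓ : ∀ t i, ℓ t i ∈ Set.Icc (0 : ℝ) 1) (n : ℕ) :
    ∑ t ∈ range n, mixWeight (η t) * ∑ i, ℓ t i * expWeights (η t) (∑ u ∈ range t, ℓ u) i
      - log (Fintype.card ι) / η n ≤ ⨅ i, ∑ t ∈ range n, ℓ t i := by
  refine le_ciInf fun i => ?_
  have := neg_sub_le_expPotential (hη n) (∑ u ∈ range n, ℓ u) i
  rw [Finset.sum_apply] at this
  linarith [sum_mixWeight_mul_add_expPotential_nonpos hη hanti hℓ n]

lemma mixedAction_nonneg {η : ℝ} (hη : 0 ≤ η) (L : ι → ℝ) (i : ι) : 0 ≤ mixedAction η L i :=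
  add_nonneg (mul_nonneg (mixWeight_nonneg hη) (expWeights_pos η L i).le)
    (div_nonneg (sub_nonneg.2 (mixWeight_le_one hη)) (Nat.cast_nonneg _))

lemma sum_mixedAction (η : ℝ) (L : ι → ℝ) : ∑ i, mixedAction η L i = 1 := by
  have hd : (Fintype.card ι : ℝ) ≠ 0 := by exact_mod_cast Fintype.card_ne_zero
  simp only [mixedAction, sum_add_distrib, ← mul_sum, sum_expWeights, sum_const, card_univ,
    nsmul_eq_mul]
  field_simp
  ring

end ExpWeights

lemma sum_le_supp0 {d : ℕ} {w : Fin d → ℝ} (hw : InCube w) : ∑ i, w i ≤ supp0 w := by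
  classical
  have hsupp : {i | w i ≠ 0} = ↑(univ.filter fun i => w i ≠ 0) := by ext; simp
  rw [← sum_filter_ne_zero, supp0, hsupp, Set.ncard_coe_finset]
  simpa using sum_le_card_nsmul _ _ 1 fun i _ => (hw i).2

/-- Each term is at most `√(m n) + (m (t + 1) - m t)`, and these telescope. -/
lemma sum_div_sqrt_le {m : ℕ → ℝ} (hm : Monotone m) (hm₀ : 1 ≤ m 0) (n : ℕ) :
    ∑ t ∈ range n, m (t + 1) / √(m t) ≤ n * √(m n) + m n := by
  have hterm : ∀ t ∈ range n, m (t + 1) / √(m t) ≤ √(m n) + (m (t + 1) - m t) := by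
    intro t ht
    have hmt : 1 ≤ m t := hm₀.trans (hm t.zero_le)
    have hsqrt : 1 ≤ √(m t) := one_le_sqrt.2 hmt
    calc m (t + 1) / √(m t) = √(m t) + (m (t + 1) - m t) / √(m t) := by
          rw [sub_div, div_sqrt]; ring
      _ ≤ √(m n) + (m (t + 1) - m t) :=
          add_le_add (sqrt_le_sqrt (hm (mem_range.1 ht).le))
            (div_le_self (sub_nonneg.2 (hm t.le_succ)) hsqrt)
  calc ∑ t ∈ range n, m (t + 1) / √(m t) ≤ ∑ t ∈ range n, (√(m n) + (m (t + 1) - m t)) :=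
        sum_le_sum hterm
    _ = n * √(m n) + (m n - m 0) := by
        rw [sum_add_distrib, sum_range_sub, sum_const, card_range, nsmul_eq_mul]
    _ ≤ n * √(m n) + m n := by linarith

section SparseStrategy

variable {d T : ℕ}

def runningSparsity (ℓ : ℕ → Fin d → ℝ) (t : ℕ) : ℕ := max 1 ((range t).sup fun u => supp0 (ℓ u))

def sparseRate (d T m : ℕ) : ℝ := d * √(log d / (d * T)) / √m

def adaptiveStrategy (d T : ℕ) (t : ℕ) (h : Fin t → Fin d → ℝ) : Fin d → ℝ :=
  mixedAction (sparseRate d T (max 1 (univ.sup fun u => supp0 (h u)))) (∑ u, h u)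

lemma isStrategy_adaptiveStrategy (hd : 0 < d) : IsStrategy (adaptiveStrategy d T) := by
  have : Nonempty (Fin d) := Fin.pos_iff_nonempty.1 hd
  intro t h
  exact ⟨mixedAction_nonneg (by unfold sparseRate; positivity) _, sum_mixedAction _ _⟩

lemma play_adaptiveStrategy (ℓ : ℕ → Fin d → ℝ) (t : ℕ) :
    play (adaptiveStrategy d T) ℓ t =
      mixedAction (sparseRate d T (runningSparsity ℓ t)) (∑ u ∈ range t, ℓ u) := by
  rw [play, adaptiveStrategy, runningSparsity, Fin.sum_univ_eq_sum_range (fun u => ℓ u),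
    ← Nat.Iio_eq_range, ← Fin.map_valEmbedding_univ, sup_map]
  rfl

lemma runningSparsity_mono (ℓ : ℕ → Fin d → ℝ) : Monotone (runningSparsity ℓ) :=
  fun _ _ h => max_le_max le_rfl (sup_mono (range_subset_range.2 h))

lemma one_le_runningSparsity (ℓ : ℕ → Fin d → ℝ) (t : ℕ) : 1 ≤ runningSparsity ℓ t :=
  le_max_left _ _

lemma supp0_le_runningSparsity_succ (ℓ : ℕ → Fin d → ℝ) (t : ℕ) :
    supp0 (ℓ t) ≤ runningSparsity ℓ (t + 1) :=
  (le_sup (f := fun u => supp0 (ℓ u)) (self_mem_range_succ t)).trans (le_max_right _ _)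

lemma sparseRate_pos (hd : 2 ≤ d) (hT : 1 ≤ T) {m : ℕ} (hm : 1 ≤ m) : 0 < sparseRate d T m := by
  have : 0 < log d := log_pos (by exact_mod_cast hd)
  have : (0 : ℝ) < d := by positivity
  have : (0 : ℝ) < T := by exact_mod_cast hT
  have : (0 : ℝ) < m := by exact_mod_cast hm
  unfold sparseRate
  positivity

lemma sparseRate_anti {a b : ℕ} (ha : 1 ≤ a) (hab : a ≤ b) : sparseRate d T b ≤ sparseRate d T a :=
  div_le_div_of_nonneg_left (by positivity) (sqrt_pos.2 (by exact_mod_cast ha))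
    (sqrt_le_sqrt (by exact_mod_cast hab))

lemma sqrt_mul_mul_log_div (hT : 1 ≤ T) (m : ℕ) :
    √(T * m * log d / d) = T * √m * √(log d / (d * T)) := by
  have hTR : (0 : ℝ) < T := by exact_mod_cast hT
  rw [show (T : ℝ) * m * log d / d = T ^ 2 * (m * (log d / (d * T))) by field_simp,
    sqrt_mul (sq_nonneg _), sqrt_sq hTR.le, sqrt_mul (Nat.cast_nonneg _), mul_assoc]

lemma log_div_sparseRate (hd : 2 ≤ d) (hT : 1 ≤ T) {m : ℕ} (hm : 1 ≤ m) :
    log d / sparseRate d T m = T * √m * √(log d / (d * T)) := by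
  have hL : 0 < log d := log_pos (by exact_mod_cast hd)
  have hdR : (0 : ℝ) < d := by positivity
  have hTR : (0 : ℝ) < T := by exact_mod_cast hT
  have hsqrt : (0 : ℝ) < √m := sqrt_pos.2 (by exact_mod_cast hm)
  have hc2 : √(log d / (d * T)) ^ 2 = log d / (d * T) := sq_sqrt (by positivity)
  rw [div_eq_iff (sparseRate_pos hd hT hm).ne', sparseRate]
  set c := √(log d / (d * T))
  calc log d = d * T * c ^ 2 := by rw [hc2]; field_simp
    _ = T * √m * c * (d * c / √m) := by field_simp

lemma one_sub_mixWeight_mul_sum_div_le (hd : 2 ≤ d) (hT : 1 ≤ T) {ℓ : ℕ → Fin d → ℝ} {t : ℕ}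
    (hℓ : InCube (ℓ t)) :
    (1 - mixWeight (sparseRate d T (runningSparsity ℓ t))) * (∑ i, ℓ t i) / d ≤
      √(log d / (d * T)) / 2 * (runningSparsity ℓ (t + 1) / √(runningSparsity ℓ t)) := by
  have hη := sparseRate_pos hd hT (one_le_runningSparsity ℓ t)
  have hdR : (0 : ℝ) < d := by positivity
  have hsum : ∑ i, ℓ t i ≤ runningSparsity ℓ (t + 1) :=
    (sum_le_supp0 hℓ).trans (by exact_mod_cast supp0_le_runningSparsity_succ ℓ t)
  have hm : (0 : ℝ) < √(runningSparsity ℓ t) :=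
    sqrt_pos.2 (by exact_mod_cast one_le_runningSparsity ℓ t)
  calc (1 - mixWeight (sparseRate d T (runningSparsity ℓ t))) * (∑ i, ℓ t i) / d
      ≤ sparseRate d T (runningSparsity ℓ t) / 2 * runningSparsity ℓ (t + 1) / d :=
        div_le_div_of_nonneg_right (mul_le_mul (one_sub_mixWeight_le hη) hsum
          (sum_nonneg fun i _ => (hℓ i).1) (by positivity)) hdR.le
    _ = √(log d / (d * T)) / 2 * (runningSparsity ℓ (t + 1) / √(runningSparsity ℓ t)) := by
        rw [sparseRate]; field_simp

lemma sum_one_sub_mixWeight_mul_sum_div_le (hd : 2 ≤ d) (hT : 1 ≤ T) {ℓ : ℕ → Fin d → ℝ}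
    (hℓ : ∀ t, InCube (ℓ t)) (n : ℕ) :
    ∑ t ∈ range n, (1 - mixWeight (sparseRate d T (runningSparsity ℓ t))) * (∑ i, ℓ t i) / d ≤
      √(log d / (d * T)) / 2 * (n * √(runningSparsity ℓ n) + runningSparsity ℓ n) := by
  refine (sum_le_sum fun t _ => one_sub_mixWeight_mul_sum_div_le hd hT (hℓ t)).trans ?_
  rw [← mul_sum]
  exact mul_le_mul_of_nonneg_left (sum_div_sqrt_le (m := fun t => (runningSparsity ℓ t : ℝ))
    (Nat.mono_cast.comp (runningSparsity_mono ℓ))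
    (by exact_mod_cast one_le_runningSparsity ℓ 0) n) (by positivity)

lemma lossRegret_adaptiveStrategy_le (hd : 2 ≤ d) (hT : 1 ≤ T) {ℓ : ℕ → Fin d → ℝ}
    (hℓ : ∀ t, InCube (ℓ t)) :
    lossRegret (adaptiveStrategy d T) ℓ T ≤
      3 / 2 * (T * √(runningSparsity ℓ T) * √(log d / (d * T))) +
        1 / 2 * (runningSparsity ℓ T * √(log d / (d * T))) := by
  have : Nonempty (Fin d) := Fin.pos_iff_nonempty.1 (by omega)
  have hedge := sum_mixWeight_mul_sub_le_iInf
    (fun t => sparseRate_pos hd hT (one_le_runningSparsity ℓ t))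
    (fun _ _ h => sparseRate_anti (one_le_runningSparsity ℓ _) (runningSparsity_mono ℓ h)) hℓ T
  rw [Fintype.card_fin, log_div_sparseRate hd hT (one_le_runningSparsity ℓ T)] at hedge
  have hmix := sum_one_sub_mixWeight_mul_sum_div_le hd hT hℓ T
  simp only [lossRegret, play_adaptiveStrategy, sum_mul_mixedAction, Fintype.card_fin,
    sum_add_distrib]
  linarith

end SparseStrategy

/-- There is a full-information strategy, not depending on any sparsity
parameter, which against any losses in `[0,1]^d` with maximal sparsity level
`s* = max_{t<T} ‖ℓ_t‖₀ ≥ 1` guarantees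
`R_T ≤ 4√(T s* log d / d) + ⌈log₂ s*⌉ (log d)/2 + 5 s* √(log d/(dT))`. -/
theorem adaptive_sparse_losses (d T : ℕ) (hd : 2 ≤ d) (hT : 1 ≤ T) :
    ∃ σ : ∀ t : ℕ, (Fin t → (Fin d → ℝ)) → (Fin d → ℝ), IsStrategy σ ∧
      ∀ ℓ : ℕ → Fin d → ℝ, (∀ t, InCube (ℓ t)) →
        ∀ sStar : ℕ, sStar = (Finset.range T).sup (fun t => supp0 (ℓ t)) → 1 ≤ sStar →
          lossRegret σ ℓ T ≤
            4 * Real.sqrt (T * sStar * Real.log d / d) +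
              (⌈Real.logb 2 sStar⌉ : ℝ) * Real.log d / 2 +
              5 * sStar * Real.sqrt (Real.log d / (d * T)) := by
  refine ⟨adaptiveStrategy d T, isStrategy_adaptiveStrategy (by omega), fun ℓ hℓ s hs hs₁ => ?_⟩
  have hsT : runningSparsity ℓ T = s := by rw [runningSparsity, ← hs, max_eq_right hs₁]
  have hregret := lossRegret_adaptiveStrategy_le hd hT hℓ
  rw [hsT] at hregret
  have hceil : (0 : ℝ) ≤ ⌈logb 2 s⌉ :=
    Int.cast_nonneg (Int.ceil_nonneg (logb_nonneg one_lt_two (by exact_mod_cast hs₁)))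
  have hlog : 0 ≤ log d := log_nonneg (by exact_mod_cast (by omega : 1 ≤ d))
  have hc : 0 ≤ √(log d / (d * T)) := sqrt_nonneg _
  rw [sqrt_mul_mul_log_div hT s]
  linarith [mul_nonneg hceil hlog, mul_nonneg (Nat.cast_nonneg (α := ℝ) s) hc,
    mul_nonneg (mul_nonneg (Nat.cast_nonneg (α := ℝ) T) (sqrt_nonneg s)) hc]

end
end

section
/- Let d ≥ 1, s an integer with 1 ≤ s ≤ d, T ≥ 1, η > 0 and q > 1. There exists a bandit strategy (Greedy Online Mirror Descent with the Legendre function F_q(x) = −(q/(q−1)) Σ_{i=1}^d (x^{(i)})^{1−1/q}, parameter η, and the usual importance-weighted loss estimates) such that for every sequence ℓ_1,…,ℓ_T of s-sparse loss vectors in [0,1]^d, the expected regret satisfies E[R_T] ≤ q ( d^{1/q}/(η(q−1)) + η T s^{1−1/q}/2 ). -/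
open Finset Filter Real

noncomputable section

/-- A bandit strategy maps, at each stage `t`, the history of past decisions and observed
outcomes `(d_1, ω_1^{(d_1)}, …, d_{t-1}, ω_{t-1}^{(d_{t-1})})` to a point of the simplex. -/
def IsBanditStrategy {d : ℕ} (σ : ∀ t : ℕ, (Fin t → Fin d × ℝ) → (Fin d → ℝ)) : Prop :=
  ∀ t h, (∀ i, 0 ≤ σ t h i) ∧ ∑ i, σ t h i = 1

/-- Probability that the bandit strategy `σ`, facing the loss vectors `ℓ`, produces the
decision path `p` during the first `T` stages. -/
def pathProb {d : ℕ} (σ : ∀ t : ℕ, (Fin t → Fin d × ℝ) → (Fin d → ℝ))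
    (ℓ : ℕ → Fin d → ℝ) (T : ℕ) (p : Fin T → Fin d) : ℝ :=
  ∏ t : Fin T,
    σ t (fun k => (p ⟨k, k.isLt.trans t.isLt⟩, ℓ k (p ⟨k, k.isLt.trans t.isLt⟩))) (p t)

/-- Expected regret of the bandit strategy `σ` against the loss vectors `ℓ` over `T` stages:
the expectation (over decision paths) of the cumulative incurred loss, minus the best
cumulative loss. -/
def banditExpRegret {d : ℕ} (σ : ∀ t : ℕ, (Fin t → Fin d × ℝ) → (Fin d → ℝ))
    (ℓ : ℕ → Fin d → ℝ) (T : ℕ) : ℝ :=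
  (∑ p : Fin T → Fin d, pathProb σ ℓ T p * ∑ t : Fin T, ℓ t (p t)) -
    ⨅ i, ∑ t ∈ Finset.range T, ℓ t i

/-!
Write `D(u, x) = ∑ j, bregmanFq q (u j) (x j)` for the Bregman divergence of `F_q`. One step of
mirror descent from `x` with the estimate `ℓ̂ = (ℓ_a / x_a) e_a` moves to `x'` with
`D(u, x') + η ⟨ℓ̂, x - u⟩ ≤ D(u, x) + (q η² / 2) ℓ̂_a² x_a ^ (1 + 1/q)`: this is the three-point
identity, the Pythagorean inequality for the Bregman projection onto the simplex, and a
second-order bound on the divergence of the unnormalised step. Averaging over the arm `a ∼ x`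
turns `⟨ℓ̂, x - u⟩` into the incurred minus the comparator loss, and the last term into
`(q η / 2) ∑ j, ℓ_j² x_j ^ (1/q) ≤ (q η / 2) s ^ (1 - 1/q)` by Hölder on the support of `ℓ`.
So `D(u, x_t) / η` is a nonnegative potential whose expected decrease pays for the regret of each
round, and it starts below `q d ^ (1/q) / (η (q - 1))` at the uniform distribution.
-/

/-- The coordinate function of the Legendre potential: `F_q x = ∑ i, Fq q (x i)`. -/
def Fq (q z : ℝ) : ℝ := -(q / (q - 1)) * z ^ (1 - 1 / q)

/-- The Bregman divergence of `Fq`, whose derivative is `z ↦ -z ^ (-1/q)`. -/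
def bregmanFq (q a b : ℝ) : ℝ := Fq q a - Fq q b + b ^ (-(1 / q)) * (a - b)

def bregmanDiv {ι : Type*} [Fintype ι] (q : ℝ) (u x : ι → ℝ) : ℝ :=
  ∑ j, bregmanFq q (u j) (x j)

@[simp]
lemma bregmanFq_self (q a : ℝ) : bregmanFq q a a = 0 := by
  simp [bregmanFq]

lemma bregmanFq_three_point (q a b c : ℝ) :
    bregmanFq q a b - bregmanFq q a c + bregmanFq q b c =
      (b ^ (-(1 / q)) - c ^ (-(1 / q))) * (a - b) := by
  unfold bregmanFq
  ring

lemma rpow_neg_inv_rpow_neg {q z : ℝ} (hq : q ≠ 0) (hz : 0 < z) :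
    (z ^ (-q)) ^ (-(1 / q)) = z := by
  rw [← Real.rpow_mul hz.le, show -q * -(1 / q) = 1 by field_simp, Real.rpow_one]

lemma rpow_neg_rpow_neg_inv {q z : ℝ} (hq : q ≠ 0) (hz : 0 < z) :
    (z ^ (-(1 / q))) ^ (-q) = z := by
  rw [← Real.rpow_mul hz.le, show -(1 / q) * -q = 1 by field_simp, Real.rpow_one]

lemma bregmanFq_nonneg {q a b : ℝ} (hq : 1 < q) (ha : 0 ≤ a) (hb : 0 < b) :
    0 ≤ bregmanFq q a b := by
  have hq0 : 0 < q := by linarith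
  set r := b ^ (-(1 / q))
  have hr : 0 < r := Real.rpow_pos_of_pos hb _
  have hbr : b ^ (1 - 1 / q) = b * r := by
    rw [sub_eq_add_neg, Real.rpow_add hb, Real.rpow_one]
  have hbr' : b ^ (1 / q) * r = 1 := by
    rw [← Real.rpow_add hb, add_neg_cancel, Real.rpow_zero]
  -- concavity of `z ↦ z ^ (1 - 1/q)` at `b`, in the form of weighted AM-GM
  have amgm := Real.geom_mean_le_arith_mean2_weighted
    (sub_nonneg.2 (div_le_one_of_le₀ hq.le hq0.le)) (by positivity) ha hb.le
    (sub_add_cancel 1 (1 / q))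
  have key : a ^ (1 - 1 / q) ≤ ((1 - 1 / q) * a + 1 / q * b) * r := by
    calc a ^ (1 - 1 / q) = a ^ (1 - 1 / q) * b ^ (1 / q) * r := by rw [mul_assoc, hbr', mul_one]
      _ ≤ _ := mul_le_mul_of_nonneg_right amgm hr.le
  have hq1 : 0 < q - 1 := by linarith
  have hc : q / (q - 1) * a ^ (1 - 1 / q) ≤ r * a + b * r / (q - 1) := by
    calc q / (q - 1) * a ^ (1 - 1 / q)
        ≤ q / (q - 1) * (((1 - 1 / q) * a + 1 / q * b) * r) := by gcongr
      _ = r * a + b * r / (q - 1) := by field_simp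
  have hc' : q / (q - 1) * (b * r) = b * r + b * r / (q - 1) := by field_simp; ring
  unfold bregmanFq Fq
  rw [hbr]
  linarith

lemma Fq_nonpos {q z : ℝ} (hq : 1 < q) (hz : 0 ≤ z) : Fq q z ≤ 0 := by
  have : 0 < q / (q - 1) := div_pos (by linarith) (by linarith)
  have := Real.rpow_nonneg hz (1 - 1 / q)
  unfold Fq
  nlinarith

lemma bregmanDiv_const_card_inv_le {ι : Type*} [Fintype ι] [Nonempty ι] {q : ℝ} (hq : 1 < q)
    {u : ι → ℝ} (hu : u ∈ stdSimplex ℝ ι) :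
    bregmanDiv q u (fun _ => (Fintype.card ι : ℝ)⁻¹) ≤
      q / (q - 1) * (Fintype.card ι : ℝ) ^ (1 / q) := by
  set N : ℝ := (Fintype.card ι : ℝ)
  have hN : 0 < N := Nat.cast_pos.2 Fintype.card_pos
  calc bregmanDiv q u (fun _ => N⁻¹) ≤ ∑ j, (-Fq q N⁻¹ + N⁻¹ ^ (-(1 / q)) * (u j - N⁻¹)) :=
        sum_le_sum fun j _ => by
          have := Fq_nonpos hq (hu.1 j)
          unfold bregmanFq
          linarith
    _ = N * -Fq q N⁻¹ := by
        rw [sum_add_distrib, ← mul_sum, sum_sub_distrib, hu.2, sum_const, sum_const, card_univ,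
          nsmul_eq_mul, nsmul_eq_mul, mul_inv_cancel₀ hN.ne', sub_self, mul_zero, add_zero]
    _ = q / (q - 1) * N ^ (1 / q) := by
        have h := Real.rpow_sub hN 1 (1 - 1 / q)
        rw [Real.rpow_one, sub_sub_cancel] at h
        rw [Fq, Real.inv_rpow hN.le, h]
        field_simp

lemma monotoneOn_Ici_of_hasDerivAt_nonneg {f f' : ℝ → ℝ} {u : ℝ}
    (hf : ∀ w ∈ Set.Ici u, HasDerivAt f (f' w) w) (hf' : ∀ w ∈ Set.Ioi u, 0 ≤ f' w) :
    MonotoneOn f (Set.Ici u) :=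
  monotoneOn_of_hasDerivWithinAt_nonneg (convex_Ici u)
    (fun w hw => (hf w hw).continuousAt.continuousWithinAt)
    (by rw [interior_Ici]; exact fun w hw => (hf w (Set.mem_Ici_of_Ioi hw)).hasDerivWithinAt)
    (by rwa [interior_Ici])

lemma self_mul_rpow_neg {q z : ℝ} (hz : 0 < z) : z * z ^ (-q) = z ^ (1 - q) := by
  rw [sub_eq_add_neg, Real.rpow_add hz, Real.rpow_one]

lemma bregmanFq_rpow_neg_rpow_neg {q u w : ℝ} (hq : 1 < q) (hu : 0 < u) (hw : 0 < w) :
    bregmanFq q (u ^ (-q)) (w ^ (-q)) =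
      w ^ (1 - q) / (q - 1) - q * u ^ (1 - q) / (q - 1) + w * u ^ (-q) := by
  have hq0 : q ≠ 0 := by positivity
  have hq1 : q - 1 ≠ 0 := by linarith
  have hpow : ∀ z : ℝ, 0 < z → (z ^ (-q)) ^ (1 - 1 / q) = z ^ (1 - q) := fun z hz => by
    rw [← Real.rpow_mul hz.le]; congr 1; field_simp; ring
  unfold bregmanFq Fq
  rw [hpow u hu, hpow w hw, rpow_neg_inv_rpow_neg hq0 hw, mul_sub, self_mul_rpow_neg hw]
  field_simp
  ring

lemma rpow_neg_sub_rpow_neg_le {q u w : ℝ} (hq : 0 ≤ q) (hu : 0 < u) (huw : u ≤ w) :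
    u ^ (-q) - w ^ (-q) ≤ q * u ^ (-q - 1) * (w - u) := by
  have hmono : MonotoneOn (fun w => q * u ^ (-q - 1) * (w - u) + w ^ (-q)) (Set.Ici u) := by
    refine monotoneOn_Ici_of_hasDerivAt_nonneg
      (f' := fun w => q * u ^ (-q - 1) - q * w ^ (-q - 1)) (fun w hw => ?_) (fun w hw => ?_)
    · exact ((((hasDerivAt_id w).sub_const u).const_mul (q * u ^ (-q - 1))).add
        (Real.hasDerivAt_rpow_const (Or.inl (hu.trans_le hw).ne'))).congr_deriv (by ring)
    · have : w ^ (-q - 1) ≤ u ^ (-q - 1) :=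
        Real.rpow_le_rpow_of_nonpos hu (le_of_lt hw) (by linarith)
      nlinarith
  have := hmono Set.self_mem_Ici huw huw
  simp only [sub_self, mul_zero, zero_add] at this
  linarith

/-- In the dual coordinates `u = x ^ (-1/q)`, `v = w ^ (-1/q)`, with the curvature of `Fq` taken
at the larger point `x`. -/
lemma bregmanFq_rpow_neg_le {q u v : ℝ} (hq : 1 < q) (hu : 0 < u) (huv : u ≤ v) :
    bregmanFq q (u ^ (-q)) (v ^ (-q)) ≤ q / 2 * u ^ (-q - 1) * (v - u) ^ 2 := by
  have hq1 : q - 1 ≠ 0 := by linarith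
  have hmono : MonotoneOn (fun w => q / 2 * u ^ (-q - 1) * (w - u) ^ 2 -
      (w ^ (1 - q) / (q - 1) - q * u ^ (1 - q) / (q - 1) + w * u ^ (-q))) (Set.Ici u) := by
    refine monotoneOn_Ici_of_hasDerivAt_nonneg
      (f' := fun w => q * u ^ (-q - 1) * (w - u) - (u ^ (-q) - w ^ (-q))) (fun w hw => ?_)
      (fun w hw => sub_nonneg.2 (rpow_neg_sub_rpow_neg_le (by linarith) hu (le_of_lt hw)))
    have hw : 0 < w := hu.trans_le hw
    refine (((((hasDerivAt_id w).sub_const u).pow 2).const_mul (q / 2 * u ^ (-q - 1))).sub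
      ((((Real.hasDerivAt_rpow_const (p := 1 - q) (Or.inl hw.ne')).div_const (q - 1)).sub_const
        (q * u ^ (1 - q) / (q - 1))).add ((hasDerivAt_id w).mul_const (u ^ (-q))))).congr_deriv ?_
    rw [show (1 - q - 1 : ℝ) = -q by ring]
    field_simp
    simp only [id_eq]
    ring
  have h := hmono Set.self_mem_Ici huv huv
  simp only [← bregmanFq_rpow_neg_rpow_neg hq hu hu, bregmanFq_self, sub_self, ne_eq,
    OfNat.ofNat_ne_zero, not_false_eq_true, zero_pow, mul_zero,
    ← bregmanFq_rpow_neg_rpow_neg hq hu (hu.trans_le huv)] at h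
  linarith

lemma bregmanFq_dual_add_le {q x δ : ℝ} (hq : 1 < q) (hx : 0 < x) (hδ : 0 ≤ δ) :
    bregmanFq q x ((x ^ (-(1 / q)) + δ) ^ (-q)) ≤ q / 2 * x ^ (1 / q - 1) * (x * δ) ^ 2 := by
  have hq0 : q ≠ 0 := by positivity
  have hu : 0 < x ^ (-(1 / q)) := Real.rpow_pos_of_pos hx _
  have h := bregmanFq_rpow_neg_le hq hu (le_add_of_nonneg_right hδ)
  rw [rpow_neg_rpow_neg_inv hq0 hx, ← Real.rpow_mul hx.le, add_sub_cancel_left] at h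
  convert h using 1
  rw [show -(1 / q) * (-q - 1) = 1 / q - 1 + 2 by field_simp; ring, Real.rpow_add hx]
  norm_cast
  ring

lemma sum_rpow_inv_le_card_rpow {ι : Type*} (S : Finset ι) {x : ι → ℝ} (hx : ∀ i ∈ S, 0 ≤ x i)
    (hx1 : ∑ i ∈ S, x i ≤ 1) {q : ℝ} (hq : 1 ≤ q) :
    ∑ i ∈ S, x i ^ (1 / q) ≤ (#S : ℝ) ^ (1 - 1 / q) := by
  have hq0 : 0 < q := by linarith
  have hN : (0 : ℝ) ≤ #S := Nat.cast_nonneg _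
  have hsum : 0 ≤ ∑ i ∈ S, x i ^ (1 / q) := sum_nonneg fun i hi => Real.rpow_nonneg (hx i hi) _
  have holder := Real.rpow_sum_le_const_mul_sum_rpow_of_nonneg S hq
    (fun i hi => Real.rpow_nonneg (hx i hi) (1 / q))
  have hxq : ∀ i ∈ S, (x i ^ (1 / q)) ^ q = x i := fun i hi => by
    rw [← Real.rpow_mul (hx i hi), one_div_mul_cancel hq0.ne', Real.rpow_one]
  rw [sum_congr rfl hxq] at holder
  calc ∑ i ∈ S, x i ^ (1 / q) = ((∑ i ∈ S, x i ^ (1 / q)) ^ q) ^ (1 / q) := by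
        rw [← Real.rpow_mul hsum, mul_one_div_cancel hq0.ne', Real.rpow_one]
    _ ≤ ((#S : ℝ) ^ (q - 1)) ^ (1 / q) := by
        gcongr
        exact holder.trans (mul_le_of_le_one_right (by positivity) hx1)
    _ = (#S : ℝ) ^ (1 - 1 / q) := by
        rw [← Real.rpow_mul hN]; congr 1; field_simp

lemma sum_sq_mul_rpow_le_of_isSparse {d s : ℕ} {q : ℝ} (hq : 1 ≤ q) {x v : Fin d → ℝ}
    (hx : ∀ j, 0 ≤ x j) (hx1 : ∑ j, x j = 1) (hv : InCube v) (hvs : IsSparse s v) :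
    ∑ j, v j ^ 2 * x j ^ (1 / q) ≤ (s : ℝ) ^ (1 - 1 / q) := by
  classical
  set S := univ.filter fun j => v j ≠ 0
  have hS : #S ≤ s := by
    rw [IsSparse, supp0, Set.ncard_eq_toFinset_card'] at hvs
    convert hvs using 2
    ext; simp [S]
  calc ∑ j, v j ^ 2 * x j ^ (1 / q) = ∑ j ∈ S, v j ^ 2 * x j ^ (1 / q) := by
        refine (sum_subset (subset_univ S) fun j _ hj => ?_).symm
        simp [S] at hj
        simp [hj]
    _ ≤ ∑ j ∈ S, x j ^ (1 / q) := by
        gcongr with j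
        have := hv j
        exact mul_le_of_le_one_left (Real.rpow_nonneg (hx j) _) (by nlinarith [this.1, this.2])
    _ ≤ (#S : ℝ) ^ (1 - 1 / q) :=
        sum_rpow_inv_le_card_rpow S (fun j _ => hx j)
          (hx1 ▸ sum_le_sum_of_subset_of_nonneg (subset_univ S) fun j _ _ => hx j) hq
    _ ≤ (s : ℝ) ^ (1 - 1 / q) := by
        gcongr
        exact sub_nonneg.2 (div_le_one_of_le₀ hq (by linarith))

lemma exists_sum_rpow_neg_sub_eq_one {ι : Type*} [Fintype ι] [Nonempty ι] {q : ℝ} (hq : 0 < q)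
    (b : ι → ℝ) : ∃ l, (∀ j, l < b j) ∧ ∑ j, (b j - l) ^ (-q) = 1 := by
  obtain ⟨j₀, -, hj₀⟩ := exists_mem_eq_inf' univ_nonempty b
  set m := univ.inf' univ_nonempty b
  have hm : ∀ j, m ≤ b j := fun j => inf'_le b (Finset.mem_univ j)
  set N : ℝ := (Fintype.card ι : ℝ)
  have hN : 1 ≤ N := Nat.one_le_cast.2 Fintype.card_pos
  have hR : 1 ≤ N ^ (1 / q) := Real.one_le_rpow hN (by positivity)
  -- at `m - N ^ (1/q)` every term is at most `1 / N`, at `m - 1` the term `j₀` alone is `1`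
  have hlo : ∑ j, (b j - (m - N ^ (1 / q))) ^ (-q) ≤ 1 := by
    calc ∑ j, (b j - (m - N ^ (1 / q))) ^ (-q) ≤ ∑ _j : ι, (N ^ (1 / q)) ^ (-q) :=
          sum_le_sum fun j _ =>
            Real.rpow_le_rpow_of_nonpos (by linarith) (by linarith [hm j]) (by linarith)
      _ = N * N⁻¹ := by
          rw [sum_const, card_univ, nsmul_eq_mul, ← Real.rpow_mul (by linarith),
            one_div_mul_eq_div, neg_div, div_self hq.ne', Real.rpow_neg_one]
      _ = 1 := mul_inv_cancel₀ (by linarith)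
  have hhi : 1 ≤ ∑ j, (b j - (m - 1)) ^ (-q) := by
    calc (1 : ℝ) = (b j₀ - (m - 1)) ^ (-q) := by rw [hj₀, sub_sub_cancel, Real.one_rpow]
      _ ≤ _ := single_le_sum (f := fun j => (b j - (m - 1)) ^ (-q))
          (fun j _ => Real.rpow_nonneg (by linarith [hm j]) _) (Finset.mem_univ j₀)
  have hcont : ContinuousOn (fun l => ∑ j, (b j - l) ^ (-q)) (Set.Icc (m - N ^ (1 / q)) (m - 1)) :=
    continuousOn_finsetSum _ fun j _ l hl =>
      ((continuous_const.sub continuous_id).continuousAt.rpow_const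
        (Or.inl (show b j - l ≠ 0 by linarith [hm j, hl.2]))).continuousWithinAt
  obtain ⟨l, hl, hsum⟩ := intermediate_value_Icc (by linarith) hcont ⟨hlo, hhi⟩
  exact ⟨l, fun j => by linarith [hm j, hl.2], hsum⟩

section MirrorStep

variable {ι : Type*} [Fintype ι]

lemma bregmanDiv_sub_shift_le {q l : ℝ} {b u : ι → ℝ} (hq : 1 < q) (hb : ∀ j, 0 < b j)
    (hl : ∀ j, l < b j) (hsum : ∑ j, u j = ∑ j, (b j - l) ^ (-q)) :
    bregmanDiv q u (fun j => (b j - l) ^ (-q)) ≤ bregmanDiv q u (fun j => b j ^ (-q)) := by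
  have hq0 : q ≠ 0 := by positivity
  -- the dual coordinates of the two points differ by the constant `l`, so the three-point
  -- identities sum to `l * (∑ x' - ∑ u) = 0`
  have h3 : ∀ j, bregmanFq q (u j) ((b j - l) ^ (-q)) - bregmanFq q (u j) (b j ^ (-q)) +
      bregmanFq q ((b j - l) ^ (-q)) (b j ^ (-q)) = l * ((b j - l) ^ (-q) - u j) := fun j => by
    rw [bregmanFq_three_point, rpow_neg_inv_rpow_neg hq0 (sub_pos.2 (hl j)),
      rpow_neg_inv_rpow_neg hq0 (hb j)]
    ring
  have hsum3 := sum_congr rfl fun j (_ : j ∈ univ) => h3 j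
  rw [sum_add_distrib, sum_sub_distrib, ← mul_sum, sum_sub_distrib, hsum, sub_self,
    mul_zero] at hsum3
  have hnonneg : 0 ≤ ∑ j, bregmanFq q ((b j - l) ^ (-q)) (b j ^ (-q)) :=
    sum_nonneg fun j _ => bregmanFq_nonneg hq (Real.rpow_nonneg (sub_pos.2 (hl j)).le _)
      (Real.rpow_pos_of_pos (hb j) _)
  unfold bregmanDiv
  linarith

variable [DecidableEq ι]

/-- Dual coordinates `-∇F_q w = x ^ (-1/q) + η ℓ̂` of the unnormalised mirror step from `x` after
the loss `o` of the arm `a` was observed; `ℓ̂ = (o / x a) • e_a` is the importance-weighted loss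
estimate. -/
def mirrorDual (η q : ℝ) (x : ι → ℝ) (a : ι) (o : ℝ) : ι → ℝ :=
  fun j => x j ^ (-(1 / q)) + if j = a then η * o / x a else 0

open Classical in
/-- Lagrange multiplier of the Bregman projection of `mirrorDual` onto the simplex. -/
def mirrorShift (η q : ℝ) (x : ι → ℝ) (a : ι) (o : ℝ) : ℝ :=
  if h : ∃ l, (∀ j, l < mirrorDual η q x a o j) ∧ ∑ j, (mirrorDual η q x a o j - l) ^ (-q) = 1
  then h.choose else 0

def gomdStep (η q : ℝ) (x : ι → ℝ) (a : ι) (o : ℝ) : ι → ℝ :=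
  fun j => (mirrorDual η q x a o j - mirrorShift η q x a o) ^ (-q)

variable {η q : ℝ}

lemma mirrorShift_lt_and_sum_gomdStep [Nonempty ι] (hq : 0 < q) (x : ι → ℝ) (a : ι) (o : ℝ) :
    (∀ j, mirrorShift η q x a o < mirrorDual η q x a o j) ∧ ∑ j, gomdStep η q x a o j = 1 := by
  have h := exists_sum_rpow_neg_sub_eq_one hq (mirrorDual η q x a o)
  have hs : mirrorShift η q x a o = h.choose := dif_pos h
  simp only [gomdStep, hs]
  exact h.choose_spec

lemma gomdStep_pos [Nonempty ι] (hq : 0 < q) (x : ι → ℝ) (a : ι) (o : ℝ) (j : ι) :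
    0 < gomdStep η q x a o j :=
  Real.rpow_pos_of_pos (sub_pos.2 ((mirrorShift_lt_and_sum_gomdStep hq x a o).1 j)) _

lemma bregmanDiv_gomdStep_add_le (hq : 1 < q) (hη : 0 ≤ η) {x u : ι → ℝ} (hx : ∀ j, 0 < x j)
    (hu : ∑ j, u j = 1) (a : ι) {o : ℝ} (ho : 0 ≤ o) :
    bregmanDiv q u (gomdStep η q x a o) + η * (o - o * u a / x a) ≤
      bregmanDiv q u x + q * η ^ 2 / 2 * o ^ 2 * x a ^ (1 / q - 1) := by
  have : Nonempty ι := ⟨a⟩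
  have hq0 : q ≠ 0 := by positivity
  set b := mirrorDual η q x a o
  set w : ι → ℝ := fun j => b j ^ (-q)
  have hδ : 0 ≤ η * o / x a := by have := hx a; positivity
  have hb : ∀ j, 0 < b j := fun j => by
    have := Real.rpow_pos_of_pos (hx j) (-(1 / q))
    simp only [b, mirrorDual]
    split_ifs <;> linarith
  have hwx : ∀ j ≠ a, w j = x j := fun j hj => by
    simp only [w, b, mirrorDual, if_neg hj, add_zero, rpow_neg_rpow_neg_inv hq0 (hx j)]
  obtain ⟨hl, hsum⟩ := mirrorShift_lt_and_sum_gomdStep (η := η) (zero_lt_one.trans hq) x a o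
  have hproj : bregmanDiv q u (gomdStep η q x a o) ≤ bregmanDiv q u w :=
    bregmanDiv_sub_shift_le hq hb hl (hu.trans hsum.symm)
  have h3 : bregmanDiv q u x - bregmanDiv q u w + bregmanDiv q x w = η * (o - o * u a / x a) := by
    have h3j : ∀ j, bregmanFq q (u j) (x j) - bregmanFq q (u j) (w j) + bregmanFq q (x j) (w j) =
        if j = a then η * o / x a * (x a - u a) else 0 := fun j => by
      rw [bregmanFq_three_point, rpow_neg_inv_rpow_neg hq0 (hb j)]
      simp only [b, mirrorDual]
      split_ifs with hj
      · rw [hj]; ring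
      · ring
    unfold bregmanDiv
    rw [← sum_sub_distrib, ← sum_add_distrib, sum_congr rfl fun j _ => h3j j, sum_ite_eq',
      if_pos (Finset.mem_univ a)]
    field_simp [(hx a).ne']
  have hlocal : bregmanDiv q x w ≤ q * η ^ 2 / 2 * o ^ 2 * x a ^ (1 / q - 1) := by
    rw [bregmanDiv, sum_eq_single a (fun j _ hj => by rw [hwx j hj, bregmanFq_self])
      (fun h => absurd (Finset.mem_univ a) h)]
    calc bregmanFq q (x a) (w a)
        ≤ q / 2 * x a ^ (1 / q - 1) * (x a * (η * o / x a)) ^ 2 := by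
          simpa [w, b, mirrorDual] using bregmanFq_dual_add_le hq (hx a) hδ
      _ = q * η ^ 2 / 2 * o ^ 2 * x a ^ (1 / q - 1) := by
          rw [mul_div_cancel₀ _ (hx a).ne']
          ring
  linarith

end MirrorStep

lemma expected_gomdStep_le {d s : ℕ} {η q : ℝ} (hq : 1 < q) (hη : 0 < η) {x u ℓ : Fin d → ℝ}
    (hx : ∀ j, 0 < x j) (hx1 : ∑ j, x j = 1) (hu : ∑ j, u j = 1) (hℓ : InCube ℓ)
    (hℓs : IsSparse s ℓ) :
    ∑ a, x a * (ℓ a + bregmanDiv q u (gomdStep η q x a (ℓ a)) / η) ≤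
      ∑ j, ℓ j * u j + q * η / 2 * (s : ℝ) ^ (1 - 1 / q) + bregmanDiv q u x / η := by
  have hstep : ∀ a, x a * (ℓ a + bregmanDiv q u (gomdStep η q x a (ℓ a)) / η) ≤
      x a * (bregmanDiv q u x / η) + ℓ a * u a + q * η / 2 * (ℓ a ^ 2 * x a ^ (1 / q)) := by
    intro a
    have hxa := hx a
    have h := mul_le_mul_of_nonneg_left
      (bregmanDiv_gomdStep_add_le hq hη.le hx hu a (hℓ a).1) (div_pos hxa hη).le
    have hpow : x a * x a ^ (1 / q - 1) = x a ^ (1 / q) := by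
      rw [Real.rpow_sub hxa, Real.rpow_one, mul_div_cancel₀ _ hxa.ne']
    have hl : x a / η * (bregmanDiv q u (gomdStep η q x a (ℓ a)) +
        η * (ℓ a - ℓ a * u a / x a)) =
        x a * (ℓ a + bregmanDiv q u (gomdStep η q x a (ℓ a)) / η) - ℓ a * u a := by
      field_simp
      ring
    have hr : x a / η * (bregmanDiv q u x + q * η ^ 2 / 2 * ℓ a ^ 2 * x a ^ (1 / q - 1)) =
        x a * (bregmanDiv q u x / η) + q * η / 2 * (ℓ a ^ 2 * (x a * x a ^ (1 / q - 1))) := by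
      field_simp
    rw [hl, hr, hpow] at h
    linarith
  have hsparse := sum_sq_mul_rpow_le_of_isSparse hq.le (fun j => (hx j).le) hx1 hℓ hℓs
  calc _ ≤ ∑ a, (x a * (bregmanDiv q u x / η) + ℓ a * u a +
        q * η / 2 * (ℓ a ^ 2 * x a ^ (1 / q))) := sum_le_sum fun a _ => hstep a
    _ = bregmanDiv q u x / η + ∑ j, ℓ j * u j + q * η / 2 * ∑ j, ℓ j ^ 2 * x j ^ (1 / q) := by
        rw [sum_add_distrib, sum_add_distrib, ← sum_mul, hx1, one_mul, ← mul_sum]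
    _ ≤ _ := by
        have : 0 ≤ q * η / 2 := by positivity
        nlinarith

/-- Greedy online mirror descent with the potential `F_q`, started at the uniform distribution. -/
def gomd (d : ℕ) (η q : ℝ) : ∀ t : ℕ, (Fin t → Fin d × ℝ) → Fin d → ℝ
  | 0, _ => fun _ => (d : ℝ)⁻¹
  | t + 1, h => gomdStep η q (gomd d η q t (Fin.init h)) (h (Fin.last t)).1 (h (Fin.last t)).2

section Strategy

variable {d : ℕ} {η q : ℝ}

lemma gomd_succ_snoc (t : ℕ) (h : Fin t → Fin d × ℝ) (y : Fin d × ℝ) :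
    gomd d η q (t + 1) (Fin.snoc h y) = gomdStep η q (gomd d η q t h) y.1 y.2 := by
  simp [gomd]

lemma gomd_pos_and_sum (hd : 1 ≤ d) (hq : 0 < q) (t : ℕ) (h : Fin t → Fin d × ℝ) :
    (∀ j, 0 < gomd d η q t h j) ∧ ∑ j, gomd d η q t h j = 1 := by
  have : Nonempty (Fin d) := ⟨⟨0, hd⟩⟩
  cases t with
  | zero =>
    have hd' : (0 : ℝ) < d := by exact_mod_cast hd
    refine ⟨fun j => inv_pos.2 hd', ?_⟩
    simp [gomd, hd'.ne']
  | succ t =>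
    exact ⟨gomdStep_pos hq _ _ _, (mirrorShift_lt_and_sum_gomdStep hq _ _ _).2⟩

lemma isBanditStrategy_gomd (hd : 1 ≤ d) (hq : 0 < q) : IsBanditStrategy (gomd d η q) :=
  fun t h => ⟨fun j => ((gomd_pos_and_sum hd hq t h).1 j).le, (gomd_pos_and_sum hd hq t h).2⟩

end Strategy

lemma sum_pi_fin_succ_eq_sum_snoc {α M : Type*} [Fintype α] [AddCommMonoid M] {n : ℕ}
    (F : (Fin (n + 1) → α) → M) : ∑ p, F p = ∑ p : Fin n → α, ∑ i, F (Fin.snoc p i) := by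
  rw [← (Fin.snocEquiv fun _ => α).sum_comp, Fintype.sum_prod_type_right]
  rfl

def history {d t : ℕ} (ℓ : ℕ → Fin d → ℝ) (p : Fin t → Fin d) : Fin t → Fin d × ℝ :=
  fun k => (p k, ℓ k (p k))

section Paths

variable {d : ℕ} {σ : ∀ t : ℕ, (Fin t → Fin d × ℝ) → (Fin d → ℝ)} (ℓ : ℕ → Fin d → ℝ)

lemma history_snoc {t : ℕ} (p : Fin t → Fin d) (i : Fin d) :
    history ℓ (Fin.snoc p i : Fin (t + 1) → Fin d) = Fin.snoc (history ℓ p) (i, ℓ t i) := by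
  funext k
  refine Fin.lastCases ?_ (fun k => ?_) k <;> simp [history]

lemma pathProb_snoc (T : ℕ) (p : Fin T → Fin d) (i : Fin d) :
    pathProb σ ℓ (T + 1) (Fin.snoc p i) = pathProb σ ℓ T p * σ T (history ℓ p) i := by
  have hmk : ∀ k (hk : k < T),
      (Fin.snoc p i : Fin (T + 1) → Fin d) ⟨k, hk.trans T.lt_succ_self⟩ = p ⟨k, hk⟩ := fun k hk =>
    Fin.snoc_castSucc (α := fun _ => Fin d) (p := p) (x := i) ⟨k, hk⟩
  rw [pathProb, Fin.prod_univ_castSucc, Fin.snoc_last]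
  congr 1
  · refine prod_congr rfl fun t _ => ?_
    simp only [Fin.val_castSucc, Fin.snoc_castSucc]
    congr 1
    funext k
    rw [hmk k (k.isLt.trans t.isLt)]
  · congr 1
    funext k
    simp only [Fin.val_last, history, hmk k k.isLt]
    rfl

lemma pathProb_nonneg (hσ : IsBanditStrategy σ) (T : ℕ) (p : Fin T → Fin d) :
    0 ≤ pathProb σ ℓ T p :=
  prod_nonneg fun _ _ => (hσ _ _).1 _

lemma sum_pathProb (hσ : IsBanditStrategy σ) (T : ℕ) :
    ∑ p : Fin T → Fin d, pathProb σ ℓ T p = 1 := by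
  induction T with
  | zero => simp [pathProb]
  | succ T ih =>
    simp_rw [sum_pi_fin_succ_eq_sum_snoc, pathProb_snoc, ← mul_sum, (hσ _ _).2, mul_one]
    exact ih

lemma sum_pathProb_mul_add_potential_le (hσ : IsBanditStrategy σ)
    (Φ : ∀ t : ℕ, (Fin t → Fin d × ℝ) → ℝ) (C : ℕ → ℝ)
    (hstep : ∀ t h, ∑ i, σ t h i * (ℓ t i + Φ (t + 1) (Fin.snoc h (i, ℓ t i))) ≤ C t + Φ t h)
    (T : ℕ) :
    ∑ p : Fin T → Fin d, pathProb σ ℓ T p * (∑ t : Fin T, ℓ t (p t) + Φ T (history ℓ p)) ≤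
      ∑ t ∈ range T, C t + Φ 0 ![] := by
  induction T with
  | zero => simpa [pathProb] using le_of_eq (congrArg (Φ 0) (Subsingleton.elim _ _))
  | succ T ih =>
    have hP := pathProb_nonneg ℓ hσ T
    calc ∑ p : Fin (T + 1) → Fin d, pathProb σ ℓ (T + 1) p *
          (∑ t : Fin (T + 1), ℓ t (p t) + Φ (T + 1) (history ℓ p))
        = ∑ p : Fin T → Fin d, pathProb σ ℓ T p * (∑ t : Fin T, ℓ t (p t) + ∑ i,
            σ T (history ℓ p) i * (ℓ T i + Φ (T + 1) (Fin.snoc (history ℓ p) (i, ℓ T i)))) := by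
          refine (sum_pi_fin_succ_eq_sum_snoc _).trans (sum_congr rfl fun p _ => ?_)
          simp only [pathProb_snoc, history_snoc, Fin.sum_univ_castSucc, Fin.snoc_castSucc,
            Fin.snoc_last, Fin.val_castSucc, Fin.val_last, mul_assoc, ← mul_sum]
          simp only [mul_add, sum_add_distrib, ← sum_mul, (hσ T _).2, one_mul, add_assoc]
      _ ≤ ∑ p : Fin T → Fin d, pathProb σ ℓ T p *
            (∑ t : Fin T, ℓ t (p t) + (C T + Φ T (history ℓ p))) := by
          gcongr with p
          · exact hP p
          · exact hstep T _
      _ = ∑ p : Fin T → Fin d, pathProb σ ℓ T p * (∑ t : Fin T, ℓ t (p t) + Φ T (history ℓ p)) +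
            C T := by
          simp only [mul_add, sum_add_distrib, ← sum_mul, sum_pathProb ℓ hσ, one_mul]
          ring
      _ ≤ ∑ t ∈ range (T + 1), C t + Φ 0 ![] := by
          rw [sum_range_succ]
          linarith

lemma sum_pathProb_mul_sum_le_of_potential (hσ : IsBanditStrategy σ)
    (Φ : ∀ t : ℕ, (Fin t → Fin d × ℝ) → ℝ) (C : ℕ → ℝ) (hΦ : ∀ t h, 0 ≤ Φ t h)
    (hstep : ∀ t h, ∑ i, σ t h i * (ℓ t i + Φ (t + 1) (Fin.snoc h (i, ℓ t i))) ≤ C t + Φ t h)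
    (T : ℕ) :
    ∑ p : Fin T → Fin d, pathProb σ ℓ T p * ∑ t : Fin T, ℓ t (p t) ≤
      ∑ t ∈ range T, C t + Φ 0 ![] :=
  (sum_le_sum fun p _ => mul_le_mul_of_nonneg_left (le_add_of_nonneg_right (hΦ T _))
    (pathProb_nonneg ℓ hσ T p)).trans (sum_pathProb_mul_add_potential_le ℓ hσ Φ C hstep T)

end Paths

lemma expected_loss_gomd_le {d s T : ℕ} (hd : 1 ≤ d) {η q : ℝ} (hη : 0 < η) (hq : 1 < q)
    {ℓ : ℕ → Fin d → ℝ} (hℓ : ∀ t, InCube (ℓ t) ∧ IsSparse s (ℓ t)) (i₀ : Fin d) :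
    ∑ p, pathProb (gomd d η q) ℓ T p * ∑ t : Fin T, ℓ t (p t) ≤ ∑ t ∈ range T, ℓ t i₀ +
      q * ((d : ℝ) ^ (1 / q) / (η * (q - 1)) + η * T * (s : ℝ) ^ (1 - 1 / q) / 2) := by
  have hq0 : 0 < q := by linarith
  have : Nonempty (Fin d) := ⟨⟨0, hd⟩⟩
  have hu : Pi.single i₀ 1 ∈ stdSimplex ℝ (Fin d) := single_mem_stdSimplex ℝ i₀
  have hΦ0 : bregmanDiv q (Pi.single i₀ 1) (gomd d η q 0 ![]) ≤
      q / (q - 1) * (d : ℝ) ^ (1 / q) := by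
    simpa [gomd] using bregmanDiv_const_card_inv_le hq hu
  have h := sum_pathProb_mul_sum_le_of_potential ℓ (isBanditStrategy_gomd hd hq0)
    (fun t h => bregmanDiv q (Pi.single i₀ 1) (gomd d η q t h) / η)
    (fun t => ℓ t i₀ + q * η / 2 * (s : ℝ) ^ (1 - 1 / q))
    (fun t h => div_nonneg (sum_nonneg fun j _ => bregmanFq_nonneg hq (hu.1 j)
      ((gomd_pos_and_sum hd hq0 t h).1 j)) hη.le)
    (fun t h => by
      obtain ⟨hx, hx1⟩ := gomd_pos_and_sum (η := η) hd hq0 t h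
      simpa [gomd_succ_snoc, Pi.single_apply] using
        expected_gomdStep_le hq hη hx hx1 hu.2 (hℓ t).1 (hℓ t).2) T
  rw [sum_add_distrib, sum_const, card_range, nsmul_eq_mul] at h
  have hΦ0' : bregmanDiv q (Pi.single i₀ 1) (gomd d η q 0 ![]) / η ≤
      q * ((d : ℝ) ^ (1 / q) / (η * (q - 1))) := by
    calc _ ≤ q / (q - 1) * (d : ℝ) ^ (1 / q) / η := by gcongr
      _ = _ := by field_simp
  linarith

theorem bandit_sparse_losses_bound_general (d s T : ℕ) (hd : 1 ≤ d) (η : ℝ) (hη : 0 < η) (q : ℝ)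
    (hq : 1 < q) :
    ∃ σ : ∀ t : ℕ, (Fin t → Fin d × ℝ) → (Fin d → ℝ), IsBanditStrategy σ ∧
      ∀ ℓ : ℕ → Fin d → ℝ, (∀ t, InCube (ℓ t) ∧ IsSparse s (ℓ t)) →
        banditExpRegret σ ℓ T ≤
          q * ((d : ℝ) ^ (1 / q) / (η * (q - 1)) + η * T * (s : ℝ) ^ (1 - 1 / q) / 2) := by
  refine ⟨gomd d η q, isBanditStrategy_gomd hd (by linarith), fun ℓ hℓ => ?_⟩
  have : Nonempty (Fin d) := ⟨⟨0, hd⟩⟩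
  have h := le_ciInf fun i₀ => sub_le_iff_le_add.2 (expected_loss_gomd_le (T := T) hd hη hq hℓ i₀)
  unfold banditExpRegret
  linarith

/-- Greedy Online Mirror Descent with the Legendre potential `F_q` and
parameter `η` guarantees, against `s`-sparse losses in `[0,1]^d`,
`E[R_T] ≤ q (d^{1/q}/(η(q-1)) + η T s^{1-1/q}/2)`. -/
theorem bandit_sparse_losses_bound (d s T : ℕ) (hd : 1 ≤ d) (hs1 : 1 ≤ s) (hsd : s ≤ d)
    (hT : 1 ≤ T) (η : ℝ) (hη : 0 < η) (q : ℝ) (hq : 1 < q) :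
    ∃ σ : ∀ t : ℕ, (Fin t → Fin d × ℝ) → (Fin d → ℝ), IsBanditStrategy σ ∧
      ∀ ℓ : ℕ → Fin d → ℝ, (∀ t, InCube (ℓ t) ∧ IsSparse s (ℓ t)) →
        banditExpRegret σ ℓ T ≤
          q * ((d : ℝ) ^ (1 / q) / (η * (q - 1)) + η * T * (s : ℝ) ^ (1 - 1 / q) / 2) :=
  bandit_sparse_losses_bound_general d s T hd η hη q hq

end
end

section
/- Let d ≥ 1 and s be an integer with 1 ≤ s ≤ d, set p = s/(2d), and let ε be a real number with 0 < ε ≤ s/(4d). Then the relative entropy between the Bernoulli distributions of parameters p and p − ε satisfies p · log( p/(p − ε) ) + (1 − p) · log( (1 − p)/(1 − p + ε) ) ≤ 4 d² ε² / ( s (2d − s) ). -/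
/-!
Write `p = s/(2d)`, so that the right-hand side is `ε²/p + ε²/(1-p)`. The second summand of the
divergence is at most `-ε + ε²/(1-p)` by `log x ≤ x - 1`. That bound is too weak for the first
summand (it would give `ε + ε²/(p-ε)`). There one uses instead `-log (1-t) ≤ t + t²` for
`t = ε/p ≤ 1/2`, which gives `ε + ε²/p`.
-/

open Real

noncomputable def bernoulliKL (a b : ℝ) : ℝ :=
  a * log (a / b) + (1 - a) * log ((1 - a) / (1 - b))

lemma neg_log_one_sub_le_self_add_sq {t : ℝ} (ht0 : 0 ≤ t) (ht : t ≤ 1 / 2) :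
    -log (1 - t) ≤ t + t ^ 2 := by
  have hexp : 1 + (t + t ^ 2) + (t + t ^ 2) ^ 2 / 2 ≤ exp (t + t ^ 2) :=
    quadratic_le_exp_of_nonneg (by positivity)
  have hkey : exp (-(t + t ^ 2)) ≤ 1 - t := by
    rw [exp_neg, inv_le_iff_one_le_mul₀ (exp_pos _)]
    nlinarith [exp_pos (t + t ^ 2)]
  linarith [(le_log_iff_exp_le (by linarith)).2 hkey]

lemma mul_log_div_sub_le {p ε : ℝ} (hp : 0 < p) (hε : 0 ≤ ε) (hεp : 2 * ε ≤ p) :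
    p * log (p / (p - ε)) ≤ ε + ε ^ 2 / p := by
  have hlog : log (p / (p - ε)) = -log (1 - ε / p) := by
    rw [← log_inv, one_sub_div hp.ne', inv_div]
  have hbound := neg_log_one_sub_le_self_add_sq (div_nonneg hε hp.le)
    (by rw [div_le_iff₀ hp]; linarith)
  calc p * log (p / (p - ε)) ≤ p * (ε / p + (ε / p) ^ 2) := by
        rw [hlog]; exact mul_le_mul_of_nonneg_left hbound hp.le
    _ = ε + ε ^ 2 / p := by field_simp

lemma mul_log_div_add_le {q ε : ℝ} (hq : 0 < q) (hε : 0 ≤ ε) :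
    q * log (q / (q + ε)) ≤ -ε + ε ^ 2 / q := by
  have hqε : 0 < q + ε := by linarith
  calc q * log (q / (q + ε)) ≤ q * (q / (q + ε) - 1) :=
        mul_le_mul_of_nonneg_left (log_le_sub_one_of_pos (by positivity)) hq.le
    _ = -ε + ε ^ 2 / (q + ε) := by field_simp; ring
    _ ≤ -ε + ε ^ 2 / q := by gcongr; linarith

lemma bernoulliKL_sub_le {p ε : ℝ} (hp : 0 < p) (hp1 : p < 1) (hε : 0 ≤ ε) (hεp : 2 * ε ≤ p) :
    bernoulliKL p (p - ε) ≤ ε ^ 2 / (p * (1 - p)) := by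
  have hq : 0 < 1 - p := by linarith
  have hsecond := mul_log_div_add_le hq hε
  rw [bernoulliKL, show 1 - (p - ε) = 1 - p + ε by ring]
  calc _ ≤ (ε + ε ^ 2 / p) + (-ε + ε ^ 2 / (1 - p)) :=
        add_le_add (mul_log_div_sub_le hp hε hεp) hsecond
    _ = ε ^ 2 / (p * (1 - p)) := by field_simp; ring

theorem bernoulli_kl_upper_bound_general (d s : ℕ) (hs1 : 1 ≤ s) (hsd : s ≤ d)
    (ε : ℝ) (hε : 0 < ε) (hε' : ε ≤ (s : ℝ) / (4 * d)) :
    ((s : ℝ) / (2 * d)) * Real.log (((s : ℝ) / (2 * d)) / ((s : ℝ) / (2 * d) - ε)) +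
      (1 - (s : ℝ) / (2 * d)) *
        Real.log ((1 - (s : ℝ) / (2 * d)) / (1 - (s : ℝ) / (2 * d) + ε)) ≤
      4 * (d : ℝ) ^ 2 * ε ^ 2 / (s * (2 * d - s)) := by
  have hs : (1 : ℝ) ≤ s := by exact_mod_cast hs1
  have hsd' : (s : ℝ) ≤ d := by exact_mod_cast hsd
  have hd : (0 : ℝ) < d := by linarith
  have hp : 0 < (s : ℝ) / (2 * d) := by positivity
  have hp1 : (s : ℝ) / (2 * d) < 1 := by rw [div_lt_one (by positivity)]; linarith
  have hεp : 2 * ε ≤ (s : ℝ) / (2 * d) := by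
    rw [le_div_iff₀ (by positivity)] at hε' ⊢
    linarith
  have hrhs : ε ^ 2 / ((s : ℝ) / (2 * d) * (1 - (s : ℝ) / (2 * d))) =
      4 * (d : ℝ) ^ 2 * ε ^ 2 / (s * (2 * d - s)) := by
    field_simp
    ring
  have hkl := bernoulliKL_sub_le hp hp1 hε.le hεp
  rwa [bernoulliKL, hrhs, show 1 - ((s : ℝ) / (2 * d) - ε) = 1 - (s : ℝ) / (2 * d) + ε by ring]
    at hkl

/-- Upper bound on the Kullback–Leibler divergence between Bernoulli
distributions of parameters `p = s/(2d)` and `p - ε`, for `0 < ε ≤ s/(4d)`: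
`D(B(1,p) ‖ B(1,p-ε)) ≤ 4 d² ε² / (s (2d - s))`. -/
theorem bernoulli_kl_upper_bound (d s : ℕ) (hd : 1 ≤ d) (hs1 : 1 ≤ s) (hsd : s ≤ d)
    (ε : ℝ) (hε : 0 < ε) (hε' : ε ≤ (s : ℝ) / (4 * d)) :
    ((s : ℝ) / (2 * d)) * Real.log (((s : ℝ) / (2 * d)) / ((s : ℝ) / (2 * d) - ε)) +
      (1 - (s : ℝ) / (2 * d)) *
        Real.log ((1 - (s : ℝ) / (2 * d)) / (1 - (s : ℝ) / (2 * d) + ε)) ≤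
      4 * (d : ℝ) ^ 2 * ε ^ 2 / (s * (2 * d - s)) :=
  bernoulli_kl_upper_bound_general d s hs1 hsd ε hε hε'
end
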